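/- arXiv:math/0310391 — 5 statements merged into one kernel-verified Lean document; each statement's English description precedes it below -/
import Mathlib

section
/- Let γ > 1 and d > 0. There exists a constant C such that for all sequences (a_n)_{n∈ℤ} and (b_n)_{n∈ℤ} with |a_n| ≤ 1/(|n|+1)^γ for all n ∈ ℤ, and b_n = t²(1-dt²)^n for n ≥ 0 and b_n = 0 for n < 0 (with 0 < t ≤ 1/√d say t small), the convolution c_n = Σ_{k∈ℤ} a_k b_{n-k} satisfies |c_n| ≤ C(1/(|n|+1)^γ + 1_{n≥0} t²(1 - (d/2)t²)^n) for all n ∈ ℤ. -/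
open Real

private lemma natCastInj : Function.Injective ((↑) : ℕ → ℤ) :=
  fun a b h => by exact_mod_cast h

private lemma indSupport (q : ℝ) :
    ∀ k : ℤ, k ∉ Set.range ((↑) : ℕ → ℤ) →
      (if 0 ≤ k then q ^ k.toNat else 0) = 0 := by
  intro k hk
  rw [if_neg]
  intro h0
  exact hk ⟨k.toNat, Int.toNat_of_nonneg h0⟩

private lemma indComp (q : ℝ) :
    ((fun k : ℤ => if 0 ≤ k then q ^ k.toNat else 0) ∘ ((↑) : ℕ → ℤ))
      = fun j : ℕ => q ^ j := by
  ext j; simp [Function.comp]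

private lemma geomIntSummable (q : ℝ) (h0 : 0 ≤ q) (h1 : q < 1) :
    Summable (fun k : ℤ => if 0 ≤ k then q ^ k.toNat else 0) := by
  refine (Function.Injective.summable_iff natCastInj (indSupport q)).1 ?_
  rw [indComp]
  exact summable_geometric_of_lt_one h0 h1

private lemma geomIntTsum (q : ℝ) (h0 : 0 ≤ q) (h1 : q < 1) :
    ∑' k : ℤ, (if 0 ≤ k then q ^ k.toNat else 0) = (1 - q)⁻¹ := by
  rw [← tsum_geometric_of_lt_one h0 h1]
  have hsupp : Function.support (fun k : ℤ => if 0 ≤ k then q ^ k.toNat else 0)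
      ⊆ Set.range ((↑) : ℕ → ℤ) := by
    intro k hk
    by_contra h
    exact hk (indSupport q k h)
  have := Function.Injective.tsum_eq natCastInj
    (f := fun k : ℤ => if 0 ≤ k then q ^ k.toNat else 0) hsupp
  rw [← this]
  exact (tsum_congr (fun j => by simp)).symm

private lemma geomShiftSummable (n : ℤ) (q : ℝ) (h0 : 0 ≤ q) (h1 : q < 1) :
    Summable (fun k : ℤ => if 0 ≤ n - k then q ^ (n - k).toNat else 0) := by
  have h := ((Equiv.subLeft n).summable_iff
    (f := fun k : ℤ => if 0 ≤ k then q ^ k.toNat else 0)).2 (geomIntSummable q h0 h1)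
  simpa only [Function.comp_def, Equiv.subLeft_apply] using h

private lemma geomShiftTsum (n : ℤ) (q : ℝ) (h0 : 0 ≤ q) (h1 : q < 1) :
    ∑' k : ℤ, (if 0 ≤ n - k then q ^ (n - k).toNat else 0) = (1 - q)⁻¹ := by
  rw [← geomIntTsum q h0 h1]
  exact ((Equiv.subLeft n).tsum_eq (fun k : ℤ => if 0 ≤ k then q ^ k.toNat else 0))

private lemma majSummable (γ : ℝ) (hγ : 1 < γ) :
    Summable (fun k : ℤ => 1 / (|(k : ℝ)| + 1) ^ γ) := by
  have hnat : Summable (fun j : ℕ => 1 / ((j : ℝ) + 1) ^ γ) := by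
    have h := (Real.summable_one_div_nat_rpow.2 hγ).comp_injective Nat.succ_injective
    have he : ((fun n : ℕ => 1 / (n : ℝ) ^ γ) ∘ Nat.succ)
        = fun j : ℕ => 1 / ((j : ℝ) + 1) ^ γ := by
      ext j; simp [Function.comp, Nat.succ_eq_add_one]
    rwa [he] at h
  apply Summable.of_nat_of_neg
  · simpa using hnat
  · simpa using hnat

private lemma absTsumLe {f : ℤ → ℝ} (h : Summable fun k => |f k|) :
    |∑' k, f k| ≤ ∑' k, |f k| := by
  have hf : Summable f := h.of_abs
  refine abs_le.2 ⟨?_, Summable.tsum_le_tsum (fun k => le_abs_self _) hf h⟩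
  have h2 := Summable.tsum_le_tsum (fun k => neg_abs_le (f k)) h.neg hf
  rw [tsum_neg] at h2
  linarith

set_option maxHeartbeats 1000000 in
/-- Convolution estimate: a sequence dominated by `1/(|n|+1)^γ` convolved with
`t²(1-dt²)^n 1_{n≥0}` is dominated by `1/(|n|+1)^γ + 1_{n≥0} t²(1-(d/2)t²)^n`. -/
theorem stmt_0 (γ d : ℝ) (hγ : 1 < γ) (hd : 0 < d) :
    ∃ C > 0, ∃ t₀ > 0, ∀ t : ℝ, 0 < t → t ≤ t₀ →
      ∀ a : ℤ → ℝ, (∀ n : ℤ, |a n| ≤ 1 / (|n| + 1 : ℝ) ^ γ) →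
        ∀ n : ℤ,
          |∑' k : ℤ, a k * (if 0 ≤ n - k then t ^ 2 * (1 - d * t ^ 2) ^ (n - k).toNat else 0)|
            ≤ C * (1 / (|n| + 1 : ℝ) ^ γ
                + if 0 ≤ n then t ^ 2 * (1 - (d / 2) * t ^ 2) ^ n.toNat else 0) := by
  have hγ0 : (0:ℝ) < γ := lt_trans one_pos hγ
  have h2γ : (0:ℝ) ≤ (2:ℝ) ^ γ := Real.rpow_nonneg (by norm_num) γ
  have hmaj := majSummable γ hγ
  set S : ℝ := ∑' k : ℤ, 1 / (|(k : ℝ)| + 1) ^ γ with hSdef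
  have hS0 : 0 ≤ S := tsum_nonneg (fun k => by positivity)
  refine ⟨S + (2:ℝ) ^ γ / d + 1 / d + 1, by positivity,
    Real.sqrt (1 / (2 * d)), Real.sqrt_pos.2 (by positivity), ?_⟩
  set C : ℝ := S + (2:ℝ) ^ γ / d + 1 / d + 1 with hCdef
  intro t ht0 ht1 a ha n
  have ht2 : t ^ 2 ≤ 1 / (2 * d) := by
    have h := pow_le_pow_left₀ ht0.le ht1 2
    rwa [Real.sq_sqrt (by positivity)] at h
  have hdt : 0 < d * t ^ 2 := by positivity
  have hdt2 : d * t ^ 2 ≤ 1 / 2 := by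
    calc d * t ^ 2 ≤ d * (1 / (2 * d)) := mul_le_mul_of_nonneg_left ht2 hd.le
      _ = 1 / 2 := by field_simp
  set q : ℝ := 1 - d * t ^ 2 with hqdef
  set r : ℝ := 1 - d / 2 * t ^ 2 with hrdef
  have hq0 : (0:ℝ) ≤ q := by rw [hqdef]; linarith
  have hq1 : q < 1 := by rw [hqdef]; linarith
  have hr0 : (0:ℝ) ≤ r := by rw [hrdef]; nlinarith
  have hr1 : r ≤ 1 := by rw [hrdef]; nlinarith
  have hqr : q ≤ r ^ 2 := by rw [hqdef, hrdef]; nlinarith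
  set ind : ℤ → ℝ := fun k => if 0 ≤ n - k then t ^ 2 * q ^ (n - k).toNat else 0 with hinddef
  have hind_nonneg : ∀ k : ℤ, 0 ≤ ind k := by
    intro k; dsimp [ind]; split
    · positivity
    · exact le_refl 0
  simp only [Int.cast_abs] at ha ⊢
  have hmaj_nonneg : ∀ k : ℤ, (0:ℝ) ≤ 1 / (|(k:ℝ)| + 1) ^ γ := fun k => by positivity
  have hind_le : ∀ k : ℤ, ind k ≤ t ^ 2 := by
    intro k; dsimp [ind]; split
    · have hp : q ^ (n - k).toNat ≤ 1 := pow_le_one₀ hq0 hq1.le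
      nlinarith [sq_nonneg t]
    · positivity
  have hg_sum : Summable (fun k : ℤ => 1 / (|(k:ℝ)| + 1) ^ γ * ind k) := by
    apply Summable.of_nonneg_of_le
      (fun k => mul_nonneg (hmaj_nonneg k) (hind_nonneg k))
      (fun k => mul_le_mul_of_nonneg_left (hind_le k) (hmaj_nonneg k))
      (hmaj.mul_right (t ^ 2))
  have habs : ∀ k : ℤ, |a k * ind k| ≤ 1 / (|(k:ℝ)| + 1) ^ γ * ind k := by
    intro k
    rw [abs_mul, abs_of_nonneg (hind_nonneg k)]
    exact mul_le_mul_of_nonneg_right (ha k) (hind_nonneg k)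
  have hfabs_sum : Summable (fun k => |a k * ind k|) :=
    Summable.of_nonneg_of_le (fun k => abs_nonneg _) habs hg_sum
  have step1 : |∑' k, a k * ind k| ≤ ∑' k : ℤ, 1 / (|(k:ℝ)| + 1) ^ γ * ind k := by
    calc |∑' k, a k * ind k| ≤ ∑' k, |a k * ind k| := absTsumLe hfabs_sum
      _ ≤ _ := Summable.tsum_le_tsum habs hfabs_sum hg_sum
  have hind_sum : Summable ind := by
    have h := (geomShiftSummable n q hq0 hq1).mul_left (t ^ 2)
    have he : (fun k : ℤ => t ^ 2 * if 0 ≤ n - k then q ^ (n - k).toNat else 0) = ind := by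
      ext k; dsimp [ind]; split <;> simp
    rwa [he] at h
  have hind_tsum : ∑' k, ind k = 1 / d := by
    have h1 : ∑' k, ind k = t ^ 2 * ∑' k : ℤ, (if 0 ≤ n - k then q ^ (n - k).toNat else 0) := by
      rw [← tsum_mul_left]
      exact tsum_congr (fun k => by dsimp [ind]; split <;> simp)
    rw [h1, geomShiftTsum n q hq0 hq1]
    have h2 : (1:ℝ) - q = d * t ^ 2 := by rw [hqdef]; ring
    rw [h2]
    have ht0' : t ≠ 0 := ne_of_gt ht0
    field_simp
  rcases lt_or_ge n 0 with hn | hn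
  · rw [if_neg (not_le.2 hn)]
    have hpt : ∀ k : ℤ, 1 / (|(k:ℝ)| + 1) ^ γ * ind k ≤ 1 / (|(n:ℝ)| + 1) ^ γ * ind k := by
      intro k
      by_cases h : 0 ≤ n - k
      · have hk : k ≤ n := by linarith [sub_nonneg.1 h]
        have hkn : (k:ℝ) ≤ (n:ℝ) := by exact_mod_cast hk
        have hn' : (n:ℝ) < 0 := by exact_mod_cast hn
        have habsle : |(n:ℝ)| ≤ |(k:ℝ)| := by
          rw [abs_of_neg hn', abs_of_neg (lt_of_le_of_lt hkn hn')]
          linarith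
        have hle : 1 / (|(k:ℝ)| + 1) ^ γ ≤ 1 / (|(n:ℝ)| + 1) ^ γ := by
          apply one_div_le_one_div_of_le (by positivity)
          exact Real.rpow_le_rpow (by positivity) (by linarith) hγ0.le
        exact mul_le_mul_of_nonneg_right hle (hind_nonneg k)
      · have : ind k = 0 := by dsimp [ind]; rw [if_neg h]
        rw [this]; simp
    calc |∑' k, a k * ind k| ≤ ∑' k : ℤ, 1 / (|(k:ℝ)| + 1) ^ γ * ind k := step1
      _ ≤ ∑' k : ℤ, 1 / (|(n:ℝ)| + 1) ^ γ * ind k :=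
          Summable.tsum_le_tsum hpt hg_sum (hind_sum.mul_left _)
      _ = 1 / (|(n:ℝ)| + 1) ^ γ * (1 / d) := by rw [tsum_mul_left, hind_tsum]
      _ ≤ C * (1 / (|(n:ℝ)| + 1) ^ γ + 0) := by
          rw [add_zero, mul_comm (1 / (|(n:ℝ)| + 1) ^ γ) (1/d)]
          apply mul_le_mul_of_nonneg_right _ (hmaj_nonneg n)
          rw [hCdef]
          have h1 : (0:ℝ) ≤ (2:ℝ) ^ γ / d := by positivity
          linarith
  · rw [if_pos hn]
    set A : ℝ := 1 / (|(n:ℝ)| + 1) ^ γ with hAdef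
    have hA0 : 0 ≤ A := hmaj_nonneg n
    set B : ℝ := t ^ 2 * r ^ n.toNat with hBdef
    have hB0 : 0 ≤ B := by rw [hBdef]; positivity
    have hpt : ∀ k : ℤ, 1 / (|(k:ℝ)| + 1) ^ γ * ind k
        ≤ B * (1 / (|(k:ℝ)| + 1) ^ γ) + ((2:ℝ) ^ γ * A) * ind k := by
      intro k
      have hh2 : 0 ≤ ((2:ℝ) ^ γ * A) * ind k :=
        mul_nonneg (mul_nonneg h2γ hA0) (hind_nonneg k)
      by_cases h : 0 ≤ n - k
      · by_cases hc : 2 * k ≤ n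
        · have hm : n.toNat ≤ 2 * (n - k).toNat := by omega
          have hq' : q ^ (n - k).toNat ≤ r ^ n.toNat := by
            calc q ^ (n - k).toNat ≤ (r ^ 2) ^ (n - k).toNat :=
                  pow_le_pow_left₀ hq0 hqr _
              _ = r ^ (2 * (n - k).toNat) := by rw [← pow_mul]
              _ ≤ r ^ n.toNat := pow_le_pow_of_le_one hr0 hr1 hm
          have hindB : ind k ≤ B := by
            dsimp [ind]; rw [if_pos h, hBdef]
            exact mul_le_mul_of_nonneg_left hq' (by positivity)
          calc 1 / (|(k:ℝ)| + 1) ^ γ * ind k ≤ 1 / (|(k:ℝ)| + 1) ^ γ * B :=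
                mul_le_mul_of_nonneg_left hindB (hmaj_nonneg k)
            _ = B * (1 / (|(k:ℝ)| + 1) ^ γ) := by ring
            _ ≤ _ := le_add_of_nonneg_right hh2
        · have hk1 : 1 ≤ k := by omega
          have hk' : (1:ℝ) ≤ (k:ℝ) := by exact_mod_cast hk1
          have hn' : (0:ℝ) ≤ (n:ℝ) := by exact_mod_cast hn
          have h2k : (n:ℝ) < 2 * (k:ℝ) := by exact_mod_cast (by omega : n < 2 * k)
          have hhalf : (|(n:ℝ)| + 1) / 2 ≤ |(k:ℝ)| + 1 := by
            rw [abs_of_nonneg hn', abs_of_nonneg (by linarith : (0:ℝ) ≤ (k:ℝ))]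
            linarith
          have hmajk : 1 / (|(k:ℝ)| + 1) ^ γ ≤ (2:ℝ) ^ γ * A := by
            have hx : ((|(n:ℝ)| + 1) / 2) ^ γ ≤ (|(k:ℝ)| + 1) ^ γ :=
              Real.rpow_le_rpow (by positivity) hhalf hγ0.le
            rw [Real.div_rpow (by positivity) (by norm_num)] at hx
            calc 1 / (|(k:ℝ)| + 1) ^ γ ≤ 1 / ((|(n:ℝ)| + 1) ^ γ / (2:ℝ) ^ γ) :=
                  one_div_le_one_div_of_le (by positivity) hx
              _ = (2:ℝ) ^ γ * A := by
                  rw [hAdef]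
                  have hne : ((|(n:ℝ)| + 1) ^ γ) ≠ 0 := by positivity
                  have hne2 : ((2:ℝ) ^ γ) ≠ 0 := by positivity
                  field_simp
          have hB1 : 0 ≤ B * (1 / (|(k:ℝ)| + 1) ^ γ) := mul_nonneg hB0 (hmaj_nonneg k)
          have := mul_le_mul_of_nonneg_right hmajk (hind_nonneg k)
          linarith
      · have hz : ind k = 0 := by dsimp [ind]; rw [if_neg h]
        rw [hz]
        simpa using mul_nonneg hB0 (hmaj_nonneg k)
    have hh1sum : Summable (fun k : ℤ => B * (1 / (|(k:ℝ)| + 1) ^ γ)) := hmaj.mul_left _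
    have hh2sum : Summable (fun k : ℤ => ((2:ℝ) ^ γ * A) * ind k) := hind_sum.mul_left _
    calc |∑' k, a k * ind k| ≤ ∑' k : ℤ, 1 / (|(k:ℝ)| + 1) ^ γ * ind k := step1
      _ ≤ ∑' k : ℤ, (B * (1 / (|(k:ℝ)| + 1) ^ γ) + ((2:ℝ) ^ γ * A) * ind k) :=
          Summable.tsum_le_tsum hpt hg_sum (hh1sum.add hh2sum)
      _ = B * S + ((2:ℝ) ^ γ * A) * (1 / d) := by
          rw [Summable.tsum_add hh1sum hh2sum, tsum_mul_left, tsum_mul_left, hind_tsum, hSdef]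
      _ ≤ C * (A + B) := by
          rw [hCdef]
          have h1 : (0:ℝ) ≤ 1 / d := by positivity
          have h2 : (0:ℝ) ≤ (2:ℝ) ^ γ / d := by positivity
          have e1 : (2:ℝ) ^ γ * A * (1 / d) = ((2:ℝ) ^ γ / d) * A := by ring
          nlinarith [mul_nonneg hS0 hB0, mul_nonneg hA0 hB0, mul_nonneg h2 hB0,
            mul_nonneg hS0 hA0, mul_nonneg h1 hA0, mul_nonneg h1 hB0]
end

section
/- Let γ > 1. Set w_n = (n+1)^{-γ} for n ≥ 0. Then there exists a constant c > 0 such that the convolution (w ⋆ w)_n = Σ_{k=0}^{n} w_k w_{n-k} satisfies (w ⋆ w)_n ≤ c · w_n for all n ≥ 0. -/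
/-- The one-sided convolution of `w n = (n+1)^{-γ}` with itself is dominated by `c · w`. -/
theorem stmt_3 (γ : ℝ) (hγ : 1 < γ) :
    ∃ c > 0, ∀ n : ℕ,
      ∑ k ∈ Finset.range (n + 1),
          ((k : ℝ) + 1) ^ (-γ) * ((n - k : ℕ) + 1 : ℝ) ^ (-γ)
        ≤ c * ((n : ℝ) + 1) ^ (-γ) := by
  have hsum : Summable (fun k : ℕ => ((k : ℝ) + 1) ^ (-γ)) := by
    have h1 : Summable (fun k : ℕ => ((k : ℝ)) ^ (-γ)) :=
      (Real.summable_nat_rpow).2 (by linarith)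
    have h2 := (summable_nat_add_iff 1).2 h1
    simpa [Nat.cast_add] using h2
  set S := ∑' k : ℕ, ((k : ℝ) + 1) ^ (-γ) with hS
  have hterm : ∀ k : ℕ, (0:ℝ) < ((k : ℝ) + 1) ^ (-γ) := fun k =>
    Real.rpow_pos_of_pos (by positivity) _
  have hS0 : 0 < S :=
    Summable.tsum_pos hsum (fun k => (hterm k).le) 0 (hterm 0)
  have h2γ : (0:ℝ) < 2 ^ γ := Real.rpow_pos_of_pos (by norm_num) _
  refine ⟨2 * 2 ^ γ * S, by positivity, fun n => ?_⟩
  set N : ℝ := (n : ℝ) + 1 with hN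
  have hN0 : 0 < N := by positivity
  have hhalf : (N / 2) ^ (-γ) = 2 ^ γ * N ^ (-γ) := by
    rw [Real.div_rpow hN0.le (by norm_num), Real.rpow_neg (by norm_num : (0:ℝ) ≤ 2),
      div_eq_mul_inv, inv_inv, mul_comm]
  have key : ∀ k ∈ Finset.range (n + 1),
      ((k : ℝ) + 1) ^ (-γ) * ((n - k : ℕ) + 1 : ℝ) ^ (-γ)
        ≤ 2 ^ γ * N ^ (-γ) * (((k : ℝ) + 1) ^ (-γ) + (((n - k : ℕ) : ℝ) + 1) ^ (-γ)) := by
    intro k hk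
    have hk' : k ≤ n := Nat.lt_succ_iff.mp (Finset.mem_range.mp hk)
    set a : ℝ := (k : ℝ) + 1 with ha
    set b : ℝ := ((n - k : ℕ) : ℝ) + 1 with hb
    have ha0 : 0 < a := by positivity
    have hb0 : 0 < b := by positivity
    have hab : a + b = N + 1 := by
      have : ((n - k : ℕ) : ℝ) = (n : ℝ) - (k : ℝ) := by
        rw [Nat.cast_sub hk']
      simp [ha, hb, this, hN]; ring
    rcases le_or_gt (N / 2) a with hcase | hcase
    · have h1 : a ^ (-γ) ≤ 2 ^ γ * N ^ (-γ) := by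
        rw [← hhalf]
        exact Real.rpow_le_rpow_of_nonpos (by positivity) hcase (by linarith)
      calc a ^ (-γ) * b ^ (-γ) ≤ (2 ^ γ * N ^ (-γ)) * b ^ (-γ) := by
            apply mul_le_mul_of_nonneg_right h1 (Real.rpow_nonneg hb0.le _)
        _ ≤ 2 ^ γ * N ^ (-γ) * (a ^ (-γ) + b ^ (-γ)) := by
            have := Real.rpow_nonneg ha0.le (-γ)
            have hNn := Real.rpow_nonneg hN0.le (-γ)
            nlinarith [Real.rpow_nonneg hb0.le (-γ)]
    · have hbge : N / 2 ≤ b := by linarith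
      have h1 : b ^ (-γ) ≤ 2 ^ γ * N ^ (-γ) := by
        rw [← hhalf]
        exact Real.rpow_le_rpow_of_nonpos (by positivity) hbge (by linarith)
      calc a ^ (-γ) * b ^ (-γ) ≤ a ^ (-γ) * (2 ^ γ * N ^ (-γ)) := by
            apply mul_le_mul_of_nonneg_left h1 (Real.rpow_nonneg ha0.le _)
        _ ≤ 2 ^ γ * N ^ (-γ) * (a ^ (-γ) + b ^ (-γ)) := by
            have := Real.rpow_nonneg hb0.le (-γ)
            have hNn := Real.rpow_nonneg hN0.le (-γ)
            nlinarith [Real.rpow_nonneg ha0.le (-γ)]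
  have hstep := Finset.sum_le_sum key
  have hpart : ∀ m : ℕ, ∑ k ∈ Finset.range m, ((k : ℝ) + 1) ^ (-γ) ≤ S :=
    fun m => Summable.sum_le_tsum (Finset.range m) (fun k _ => (hterm k).le) hsum
  have hrefl : ∑ k ∈ Finset.range (n + 1), (((n - k : ℕ) : ℝ) + 1) ^ (-γ)
      = ∑ k ∈ Finset.range (n + 1), ((k : ℝ) + 1) ^ (-γ) := by
    have h := Finset.sum_range_reflect (fun k : ℕ => (((n - k : ℕ) : ℝ) + 1) ^ (-γ)) (n + 1)
    rw [← h]
    apply Finset.sum_congr rfl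
    intro k hk
    have hk' : k ≤ n := Nat.lt_succ_iff.mp (Finset.mem_range.mp hk)
    congr 3
    omega
  calc ∑ k ∈ Finset.range (n + 1),
      ((k : ℝ) + 1) ^ (-γ) * ((n - k : ℕ) + 1 : ℝ) ^ (-γ)
      ≤ ∑ k ∈ Finset.range (n + 1),
        2 ^ γ * N ^ (-γ) * (((k : ℝ) + 1) ^ (-γ) + (((n - k : ℕ) : ℝ) + 1) ^ (-γ)) := hstep
    _ = 2 ^ γ * N ^ (-γ) *
        (∑ k ∈ Finset.range (n + 1), ((k : ℝ) + 1) ^ (-γ)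
          + ∑ k ∈ Finset.range (n + 1), (((n - k : ℕ) : ℝ) + 1) ^ (-γ)) := by
        rw [← Finset.mul_sum, Finset.sum_add_distrib]
    _ = 2 ^ γ * N ^ (-γ) * (2 * ∑ k ∈ Finset.range (n + 1), ((k : ℝ) + 1) ^ (-γ)) := by
        rw [hrefl]; ring
    _ ≤ 2 ^ γ * N ^ (-γ) * (2 * S) := by
        have hNn := Real.rpow_nonneg hN0.le (-γ)
        gcongr
        exact hpart (n + 1)
    _ = 2 * 2 ^ γ * S * N ^ (-γ) := by ring
end

section
/- Let 𝒞 be a Banach algebra and γ > 1. The space 𝒪_γ(𝒞) of formal series Σ_{n∈ℤ} A_n z^n with A_n ∈ 𝒞 and ‖A_n‖ = O(1/(|n|+1)^γ), equipped with the convolution product and the norm ‖Σ A_n z^n‖ = (Σ_n ‖A_n‖ + c·sup_{n≥0} ‖A_n‖/w_n) + (Σ_n ‖A_n‖ + c·sup_{n≤0} ‖A_n‖/w_{|n|}), where w_n = (n+1)^{-γ} and c is a constant with w ⋆ w ≤ c·w, is a Banach algebra: the norm is complete and submultiplicative. -/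
open Filter Topology

variable {𝒞 : Type*} [NormedRing 𝒞] [CompleteSpace 𝒞]

/-- The weight sequence `w n = (n+1)^{-γ}`. -/
noncomputable def wSeq (γ : ℝ) (n : ℕ) : ℝ := ((n : ℝ) + 1) ^ (-γ)

/-- Membership in `𝒪_γ(𝒞)` : coefficients are `O(1/(|n|+1)^γ)`. -/
def MemOgamma (γ : ℝ) (A : ℤ → 𝒞) : Prop :=
  ∃ C : ℝ, ∀ n : ℤ, ‖A n‖ ≤ C * ((|n| : ℝ) + 1) ^ (-γ)

/-- Convolution product of two-sided series. -/
noncomputable def convSeq (A B : ℤ → 𝒞) (n : ℤ) : 𝒞 := ∑' k : ℤ, A k * B (n - k)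

/-- The norm on `𝒪_γ(𝒞)`. -/
noncomputable def OgammaNorm (γ c : ℝ) (A : ℤ → 𝒞) : ℝ :=
  ((∑' n : ℤ, ‖A n‖) + c * ⨆ n : ℕ, ‖A (n : ℤ)‖ / wSeq γ n)
    + ((∑' n : ℤ, ‖A n‖) + c * ⨆ n : ℕ, ‖A (-(n : ℤ))‖ / wSeq γ n)

/- ### Auxiliary definitions and lemmas -/

/-- the ℓ¹ part of the norm -/
noncomputable def Ssum (A : ℤ → 𝒞) : ℝ := ∑' n : ℤ, ‖A n‖

/-- the weighted sup part of the norm (positive side) -/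
noncomputable def Msup (γ : ℝ) (A : ℤ → 𝒞) : ℝ := ⨆ n : ℕ, ‖A (n : ℤ)‖ / wSeq γ n

/-- reversal of a two-sided sequence -/
def revS (A : ℤ → 𝒞) : ℤ → 𝒞 := fun n => A (-n)

lemma ogammaNorm_eq (γ c : ℝ) (A : ℤ → 𝒞) :
    OgammaNorm γ c A = (Ssum A + c * Msup γ A) + (Ssum A + c * Msup γ (revS A)) := rfl

lemma wSeq_pos (γ : ℝ) (n : ℕ) : 0 < wSeq γ n :=
  Real.rpow_pos_of_pos (by positivity) _

lemma wSeq_anti {γ : ℝ} (hγ : 0 < γ) : Antitone (wSeq γ) := by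
  intro m n h
  have : (m : ℝ) + 1 ≤ (n : ℝ) + 1 := by exact_mod_cast Nat.succ_le_succ h
  exact Real.rpow_le_rpow_of_nonpos (by positivity) this (by linarith)

lemma wSeq_le_one {γ : ℝ} (hγ : 0 < γ) (n : ℕ) : wSeq γ n ≤ 1 :=
  Real.rpow_le_one_of_one_le_of_nonpos (by simp [Nat.cast_nonneg]) (by linarith)

lemma summable_wSeq {γ : ℝ} (hγ : 1 < γ) : Summable (wSeq γ) := by
  have h0 : Summable (fun n : ℕ => ((n : ℝ)) ^ (-γ)) :=
    Real.summable_nat_rpow.2 (by linarith)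
  have h1 := (summable_nat_add_iff 1).2 h0
  refine h1.congr fun n => ?_
  simp [wSeq]

lemma summable_wZ {γ : ℝ} (hγ : 1 < γ) : Summable (fun n : ℤ => wSeq γ n.natAbs) := by
  refine Summable.of_nat_of_neg ?_ ?_ <;>
    · refine (summable_wSeq hγ).congr fun n => ?_
      simp

lemma memO_bound {γ : ℝ} {A : ℤ → 𝒞} (hA : MemOgamma γ A) :
    ∃ C : ℝ, 0 ≤ C ∧ ∀ n : ℤ, ‖A n‖ ≤ C * wSeq γ n.natAbs := by
  obtain ⟨C, hC⟩ := hA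
  have hcast : ∀ n : ℤ, ((|n| : ℝ) + 1) ^ (-γ) = wSeq γ n.natAbs := by
    intro n
    have : (|n| : ℝ) = (n.natAbs : ℝ) := by
      rw [Nat.cast_natAbs, Int.cast_abs]
    rw [wSeq, this]
  refine ⟨C, ?_, fun n => by rw [← hcast]; exact hC n⟩
  have h0 := hC 0
  simp at h0
  exact (norm_nonneg _).trans h0

lemma memO_of_bound {γ C : ℝ} {A : ℤ → 𝒞} (h : ∀ n : ℤ, ‖A n‖ ≤ C * wSeq γ n.natAbs) :
    MemOgamma γ A := by
  refine ⟨C, fun n => ?_⟩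
  have : (|n| : ℝ) = (n.natAbs : ℝ) := by
    rw [Nat.cast_natAbs, Int.cast_abs]
  rw [this]
  exact h n

lemma summable_norm {γ : ℝ} (hγ : 1 < γ) {A : ℤ → 𝒞} (hA : MemOgamma γ A) :
    Summable (fun n : ℤ => ‖A n‖) := by
  obtain ⟨C, _, hC⟩ := memO_bound hA
  exact Summable.of_nonneg_of_le (fun n => norm_nonneg _) hC ((summable_wZ hγ).mul_left C)

lemma Ssum_nonneg (A : ℤ → 𝒞) : 0 ≤ Ssum A := tsum_nonneg fun n => norm_nonneg _

lemma Msup_nonneg (γ : ℝ) (A : ℤ → 𝒞) : 0 ≤ Msup γ A :=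
  Real.iSup_nonneg fun n => div_nonneg (norm_nonneg _) (wSeq_pos _ _).le

lemma Ssum_rev (A : ℤ → 𝒞) : Ssum (revS A) = Ssum A := by
  unfold Ssum revS
  rw [← (Equiv.neg ℤ).tsum_eq (fun n => ‖A n‖)]
  simp

lemma memO_rev {γ : ℝ} {A : ℤ → 𝒞} (hA : MemOgamma γ A) : MemOgamma γ (revS A) := by
  obtain ⟨C, hC⟩ := hA
  exact ⟨C, fun n => by simpa [revS, abs_neg] using hC (-n)⟩

lemma memO_sub {γ : ℝ} {A B : ℤ → 𝒞} (hA : MemOgamma γ A) (hB : MemOgamma γ B) :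
    MemOgamma γ (fun n => A n - B n) := by
  obtain ⟨C, hC0, hC⟩ := memO_bound hA
  obtain ⟨D, hD0, hD⟩ := memO_bound hB
  refine memO_of_bound (C := C + D) fun n => ?_
  calc ‖A n - B n‖ ≤ ‖A n‖ + ‖B n‖ := norm_sub_le _ _
    _ ≤ C * wSeq γ n.natAbs + D * wSeq γ n.natAbs := add_le_add (hC n) (hD n)
    _ = (C + D) * wSeq γ n.natAbs := by ring

lemma bddP {γ : ℝ} {A : ℤ → 𝒞} (hA : MemOgamma γ A) :
    BddAbove (Set.range fun n : ℕ => ‖A (n : ℤ)‖ / wSeq γ n) := by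
  obtain ⟨C, hC0, hC⟩ := memO_bound hA
  refine ⟨C, ?_⟩
  rintro x ⟨n, rfl⟩
  rw [div_le_iff₀ (wSeq_pos γ n)]
  simpa using hC (n : ℤ)

lemma norm_le_Msup {γ : ℝ} {A : ℤ → 𝒞} (hA : MemOgamma γ A) {n : ℤ} (hn : 0 ≤ n) :
    ‖A n‖ ≤ Msup γ A * wSeq γ n.toNat := by
  have h := le_ciSup (bddP hA) n.toNat
  rw [Int.toNat_of_nonneg hn] at h
  exact (div_le_iff₀ (wSeq_pos γ n.toNat)).1 h

lemma summable_f {γ : ℝ} (hγ : 1 < γ) {A B : ℤ → 𝒞} (hA : MemOgamma γ A)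
    (hB : MemOgamma γ B) (n : ℤ) :
    Summable fun k : ℤ => ‖A k‖ * ‖B (n - k)‖ := by
  obtain ⟨C, hC0, hC⟩ := memO_bound hB
  refine Summable.of_nonneg_of_le (fun k => by positivity) (fun k => ?_)
    ((summable_norm hγ hA).mul_right C)
  refine mul_le_mul_of_nonneg_left ?_ (norm_nonneg _)
  exact (hC _).trans (mul_le_of_le_one_right hC0 (wSeq_le_one (by linarith) _))

/-- the shear equivalence on `ℤ × ℤ` -/
def shear : ℤ × ℤ ≃ ℤ × ℤ where
  toFun p := (p.1 + p.2, p.2)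
  invFun p := (p.1 - p.2, p.2)
  left_inv p := by simp
  right_inv p := by simp

lemma summable_F {γ : ℝ} (hγ : 1 < γ) {A B : ℤ → 𝒞} (hA : MemOgamma γ A)
    (hB : MemOgamma γ B) :
    Summable (fun p : ℤ × ℤ => ‖A p.2‖ * ‖B (p.1 - p.2)‖) := by
  have hH : Summable (fun p : ℤ × ℤ => ‖B p.1‖ * ‖A p.2‖) :=
    (summable_norm hγ hB).mul_of_nonneg (summable_norm hγ hA)
      (fun _ => norm_nonneg _) (fun _ => norm_nonneg _)
  have := (shear.symm.summable_iff (f := fun p : ℤ × ℤ => ‖B p.1‖ * ‖A p.2‖)).2 hH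
  refine this.congr fun p => ?_
  simp [shear, Function.comp, mul_comm]

lemma tsum_F {γ : ℝ} (hγ : 1 < γ) {A B : ℤ → 𝒞} (hA : MemOgamma γ A) (hB : MemOgamma γ B) :
    ∑' p : ℤ × ℤ, ‖A p.2‖ * ‖B (p.1 - p.2)‖ = Ssum A * Ssum B := by
  have h1 : ∑' p : ℤ × ℤ, ‖A p.2‖ * ‖B (p.1 - p.2)‖
      = ∑' p : ℤ × ℤ, ‖A p.2‖ * ‖B p.1‖ := by
    rw [← shear.tsum_eq (fun p : ℤ × ℤ => ‖A p.2‖ * ‖B (p.1 - p.2)‖)]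
    refine tsum_congr fun p => ?_
    simp [shear]
  have h2 : ∑' p : ℤ × ℤ, ‖A p.1‖ * ‖B p.2‖ = ∑' p : ℤ × ℤ, ‖A p.2‖ * ‖B p.1‖ := by
    rw [← (Equiv.prodComm ℤ ℤ).tsum_eq (fun p : ℤ × ℤ => ‖A p.2‖ * ‖B p.1‖)]
    exact tsum_congr fun p => by simp
  have h3 := tsum_mul_tsum_of_summable_norm (f := fun n : ℤ => ‖A n‖) (g := fun n : ℤ => ‖B n‖)
    (by simpa using summable_norm hγ hA) (by simpa using summable_norm hγ hB)
  rw [h1, ← h2, ← h3]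
  rfl

lemma norm_conv_le {γ : ℝ} (hγ : 1 < γ) {A B : ℤ → 𝒞} (hA : MemOgamma γ A)
    (hB : MemOgamma γ B) (n : ℤ) :
    ‖convSeq A B n‖ ≤ ∑' k : ℤ, ‖A k‖ * ‖B (n - k)‖ := by
  have hs : Summable fun k : ℤ => ‖A k * B (n - k)‖ :=
    Summable.of_nonneg_of_le (fun k => norm_nonneg _) (fun k => norm_mul_le _ _)
      (summable_f hγ hA hB n)
  exact (norm_tsum_le_tsum_norm hs).trans
    (Summable.tsum_le_tsum (fun k => norm_mul_le _ _) hs (summable_f hγ hA hB n))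

lemma summable_marg {γ : ℝ} (hγ : 1 < γ) {A B : ℤ → 𝒞} (hA : MemOgamma γ A)
    (hB : MemOgamma γ B) :
    Summable (fun n : ℤ => ∑' k : ℤ, ‖A k‖ * ‖B (n - k)‖) :=
  ((summable_prod_of_nonneg (fun p => by positivity)).1 (summable_F hγ hA hB)).2

lemma summable_norm_conv {γ : ℝ} (hγ : 1 < γ) {A B : ℤ → 𝒞} (hA : MemOgamma γ A)
    (hB : MemOgamma γ B) :
    Summable (fun n : ℤ => ‖convSeq A B n‖) :=
  Summable.of_nonneg_of_le (fun n => norm_nonneg _) (norm_conv_le hγ hA hB)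
    (summable_marg hγ hA hB)

lemma Ssum_conv_le {γ : ℝ} (hγ : 1 < γ) {A B : ℤ → 𝒞} (hA : MemOgamma γ A)
    (hB : MemOgamma γ B) :
    Ssum (convSeq A B) ≤ Ssum A * Ssum B := by
  have h1 : Ssum (convSeq A B) ≤ ∑' n : ℤ, ∑' k : ℤ, ‖A k‖ * ‖B (n - k)‖ :=
    Summable.tsum_le_tsum (norm_conv_le hγ hA hB) (summable_norm_conv hγ hA hB)
      (summable_marg hγ hA hB)
  rw [← Summable.tsum_prod' (summable_F hγ hA hB) (fun n => summable_f hγ hA hB n)] at h1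
  rwa [tsum_F hγ hA hB] at h1

set_option maxHeartbeats 1000000 in
/-- The key pointwise estimate for nonnegative indices. -/
lemma key_bound {γ c : ℝ} (hγ : 1 < γ) (hc : 0 < c)
    (hcw : ∀ n : ℕ, ∑ k ∈ Finset.range (n + 1), wSeq γ k * wSeq γ (n - k) ≤ c * wSeq γ n)
    {A B : ℤ → 𝒞} (hA : MemOgamma γ A) (hB : MemOgamma γ B) {n : ℤ} (hn : 0 ≤ n) :
    ∑' k : ℤ, ‖A k‖ * ‖B (n - k)‖ ≤
      (Ssum A * Msup γ B + c * (Msup γ A * Msup γ B) + Msup γ A * Ssum B)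
        * wSeq γ n.toNat := by
  set m := n.toNat with hm
  set f : ℤ → ℝ := fun k => ‖A k‖ * ‖B (n - k)‖ with hfdef
  have hf : Summable f := summable_f hγ hA hB n
  have hw0 : ∀ j : ℕ, 0 ≤ wSeq γ j := fun j => (wSeq_pos γ j).le
  -- split the sum in three regions
  have hsplit : ∑' k : ℤ, f k
      = (∑' k : (Set.Iio (0 : ℤ)), f k)
        + ((∑' k : (Set.Icc (0 : ℤ) n), f k) + (∑' k : (Set.Ioi n), f k)) := by
    rw [tsum_subtype, tsum_subtype, tsum_subtype,
      ← Summable.tsum_add (hf.indicator _) (hf.indicator _),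
      ← Summable.tsum_add (hf.indicator _) ((hf.indicator _).add (hf.indicator _))]
    refine tsum_congr fun k => ?_
    by_cases h1 : k < 0
    · rw [Set.indicator_of_mem (by simpa using h1),
        Set.indicator_of_notMem (by simp [Set.mem_Icc]; omega),
        Set.indicator_of_notMem (by simp [Set.mem_Ioi]; omega)]
      ring
    · by_cases h2 : k ≤ n
      · rw [Set.indicator_of_notMem (by simpa using h1),
          Set.indicator_of_mem (by simp [Set.mem_Icc]; omega),
          Set.indicator_of_notMem (by simp [Set.mem_Ioi]; omega)]
        ring
      · rw [Set.indicator_of_notMem (by simpa using h1),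
          Set.indicator_of_notMem (by simp [Set.mem_Icc]; omega),
          Set.indicator_of_mem (by simp [Set.mem_Ioi]; omega)]
        ring
  -- region 1 : k < 0
  have hB1 : (∑' k : (Set.Iio (0 : ℤ)), f k) ≤ Ssum A * (Msup γ B * wSeq γ m) := by
    have := Summable.tsum_le_tsum_of_inj (fun k : (Set.Iio (0 : ℤ)) => (k : ℤ))
      Subtype.val_injective
      (fun k _ => mul_nonneg (norm_nonneg _) (mul_nonneg (Msup_nonneg γ B) (hw0 _)))
      (fun b => ?_) (hf.subtype _) ((summable_norm hγ hA).mul_right (Msup γ B * wSeq γ m))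
    · calc (∑' k : (Set.Iio (0 : ℤ)), f k)
          ≤ ∑' k : ℤ, ‖A k‖ * (Msup γ B * wSeq γ m) := this
        _ = Ssum A * (Msup γ B * wSeq γ m) := tsum_mul_right
    · -- b : Set.Iio 0, show f b ≤ ‖A b‖ * (Msup γ B * wSeq γ m)
      have hb : (b : ℤ) < 0 := b.2
      have h1 : (0 : ℤ) ≤ n - b := by omega
      have h2 : ‖B (n - b)‖ ≤ Msup γ B * wSeq γ (n - (b : ℤ)).toNat := norm_le_Msup hB h1
      have h3 : wSeq γ (n - (b : ℤ)).toNat ≤ wSeq γ m :=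
        wSeq_anti (by linarith) (by omega)
      refine mul_le_mul_of_nonneg_left (h2.trans ?_) (norm_nonneg _)
      exact mul_le_mul_of_nonneg_left h3 (Msup_nonneg γ B)
  -- region 3 : k > n
  have hB3 : (∑' k : (Set.Ioi n), f k) ≤ (Msup γ A * wSeq γ m) * Ssum B := by
    have hinj : Function.Injective (fun k : (Set.Ioi n) => n - (k : ℤ)) := by
      intro a b h
      simp only at h
      exact Subtype.ext (by omega)
    have := Summable.tsum_le_tsum_of_inj (fun k : (Set.Ioi n) => n - (k : ℤ)) hinj
      (fun k _ => mul_nonneg (mul_nonneg (Msup_nonneg γ A) (hw0 _)) (norm_nonneg _))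
      (fun b => ?_) (hf.subtype _) ((summable_norm hγ hB).mul_left (Msup γ A * wSeq γ m))
    · calc (∑' k : (Set.Ioi n), f k)
          ≤ ∑' j : ℤ, (Msup γ A * wSeq γ m) * ‖B j‖ := this
        _ = (Msup γ A * wSeq γ m) * Ssum B := tsum_mul_left
    · have hb : n < (b : ℤ) := b.2
      have h1 : (0 : ℤ) ≤ (b : ℤ) := by omega
      have h2 : ‖A (b : ℤ)‖ ≤ Msup γ A * wSeq γ ((b : ℤ)).toNat := norm_le_Msup hA h1
      have h3 : wSeq γ ((b : ℤ)).toNat ≤ wSeq γ m :=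
        wSeq_anti (by linarith) (by omega)
      refine mul_le_mul_of_nonneg_right (h2.trans ?_) (norm_nonneg _)
      exact mul_le_mul_of_nonneg_left h3 (Msup_nonneg γ A)
  -- region 2 : 0 ≤ k ≤ n
  have hB2 : (∑' k : (Set.Icc (0 : ℤ) n), f k) ≤ Msup γ A * Msup γ B * (c * wSeq γ m) := by
    rw [← Finset.coe_Icc, Finset.tsum_subtype']
    have h1 : ∑ k ∈ Finset.Icc (0 : ℤ) n, f k
        ≤ ∑ k ∈ Finset.Icc (0 : ℤ) n,
            (Msup γ A * Msup γ B) * (wSeq γ k.toNat * wSeq γ (n - k).toNat) := by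
      refine Finset.sum_le_sum fun k hk => ?_
      simp only [Finset.mem_Icc] at hk
      have ha := norm_le_Msup hA hk.1
      have hb := norm_le_Msup hB (by omega : (0 : ℤ) ≤ n - k)
      calc f k ≤ (Msup γ A * wSeq γ k.toNat) * (Msup γ B * wSeq γ (n - k).toNat) :=
            mul_le_mul ha hb (norm_nonneg _)
              (mul_nonneg (Msup_nonneg γ A) (hw0 _))
        _ = (Msup γ A * Msup γ B) * (wSeq γ k.toNat * wSeq γ (n - k).toNat) := by ring
    have h2 : ∑ k ∈ Finset.Icc (0 : ℤ) n, wSeq γ k.toNat * wSeq γ (n - k).toNat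
        = ∑ j ∈ Finset.range (m + 1), wSeq γ j * wSeq γ (m - j) := by
      refine Finset.sum_nbij' (fun k => k.toNat) (fun j => (j : ℤ)) ?_ ?_ ?_ ?_ ?_
      · intro a ha; simp only [Finset.mem_Icc] at ha; simp only [Finset.mem_range]; omega
      · intro a ha; simp only [Finset.mem_range] at ha; simp only [Finset.mem_Icc]
        constructor <;> [positivity; omega]
      · intro a ha; simp only [Finset.mem_Icc] at ha; omega
      · intro a ha; simp only [Finset.mem_range] at ha; omega
      · intro a ha; simp only [Finset.mem_Icc] at ha
        have h1 : (n - a).toNat = m - a.toNat := by omega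
        rw [h1]
    calc ∑ k ∈ Finset.Icc (0 : ℤ) n, f k
        ≤ (Msup γ A * Msup γ B)
            * ∑ k ∈ Finset.Icc (0 : ℤ) n, wSeq γ k.toNat * wSeq γ (n - k).toNat := by
          rw [← Finset.mul_sum] at h1; exact h1
      _ = (Msup γ A * Msup γ B) * ∑ j ∈ Finset.range (m + 1), wSeq γ j * wSeq γ (m - j) := by
          rw [h2]
      _ ≤ Msup γ A * Msup γ B * (c * wSeq γ m) :=
          mul_le_mul_of_nonneg_left (hcw m)
            (mul_nonneg (Msup_nonneg γ A) (Msup_nonneg γ B))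
  calc ∑' k : ℤ, f k
      = (∑' k : (Set.Iio (0 : ℤ)), f k)
        + ((∑' k : (Set.Icc (0 : ℤ) n), f k) + (∑' k : (Set.Ioi n), f k)) := hsplit
    _ ≤ Ssum A * (Msup γ B * wSeq γ m)
        + (Msup γ A * Msup γ B * (c * wSeq γ m) + (Msup γ A * wSeq γ m) * Ssum B) :=
        add_le_add hB1 (add_le_add hB2 hB3)
    _ = (Ssum A * Msup γ B + c * (Msup γ A * Msup γ B) + Msup γ A * Ssum B) * wSeq γ m := by
        ring

lemma Msup_conv_le {γ c : ℝ} (hγ : 1 < γ) (hc : 0 < c)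
    (hcw : ∀ n : ℕ, ∑ k ∈ Finset.range (n + 1), wSeq γ k * wSeq γ (n - k) ≤ c * wSeq γ n)
    {A B : ℤ → 𝒞} (hA : MemOgamma γ A) (hB : MemOgamma γ B) :
    Msup γ (convSeq A B) ≤
      Ssum A * Msup γ B + c * (Msup γ A * Msup γ B) + Msup γ A * Ssum B := by
  refine ciSup_le fun n => ?_
  rw [div_le_iff₀ (wSeq_pos γ n)]
  have h1 := (norm_conv_le hγ hA hB (n : ℤ)).trans
    (key_bound hγ hc hcw hA hB (n := (n : ℤ)) (by positivity))
  simpa using h1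

lemma rev_conv (A B : ℤ → 𝒞) (n : ℤ) :
    revS (convSeq A B) n = convSeq (revS A) (revS B) n := by
  unfold revS convSeq
  calc (∑' k : ℤ, A k * B (-n - k))
      = ∑' k : ℤ, A (- (Equiv.neg ℤ k)) * B (-(n - Equiv.neg ℤ k)) := by
        refine tsum_congr fun k => ?_
        simp only [Equiv.neg_apply, neg_neg]
        rw [show -(n - -k) = -n - k by ring]
    _ = ∑' k : ℤ, A (-k) * B (-(n - k)) :=
        (Equiv.neg ℤ).tsum_eq (fun k => A (-k) * B (-(n - k)))

lemma half_mul {γ c : ℝ} (hγ : 1 < γ) (hc : 0 < c)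
    (hcw : ∀ n : ℕ, ∑ k ∈ Finset.range (n + 1), wSeq γ k * wSeq γ (n - k) ≤ c * wSeq γ n)
    {A B : ℤ → 𝒞} (hA : MemOgamma γ A) (hB : MemOgamma γ B) :
    Ssum (convSeq A B) + c * Msup γ (convSeq A B)
      ≤ (Ssum A + c * Msup γ A) * (Ssum B + c * Msup γ B) := by
  have h1 := Ssum_conv_le hγ hA hB
  have h2 := Msup_conv_le hγ hc hcw hA hB
  calc Ssum (convSeq A B) + c * Msup γ (convSeq A B)
      ≤ Ssum A * Ssum B
        + c * (Ssum A * Msup γ B + c * (Msup γ A * Msup γ B) + Msup γ A * Ssum B) :=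
        add_le_add h1 (mul_le_mul_of_nonneg_left h2 hc.le)
    _ = (Ssum A + c * Msup γ A) * (Ssum B + c * Msup γ B) := by ring

set_option maxHeartbeats 2000000 in
/-- `𝒪_γ(𝒞)` with the above norm is a Banach algebra: the norm is
submultiplicative on it and it is complete. -/
theorem stmt_5 (γ c : ℝ) (hγ : 1 < γ) (hc : 0 < c)
    (hcw : ∀ n : ℕ, ∑ k ∈ Finset.range (n + 1), wSeq γ k * wSeq γ (n - k) ≤ c * wSeq γ n) :
    (∀ A B : ℤ → 𝒞, MemOgamma γ A → MemOgamma γ B →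
        MemOgamma γ (convSeq A B) ∧
        OgammaNorm γ c (convSeq A B) ≤ OgammaNorm γ c A * OgammaNorm γ c B)
    ∧ (∀ F : ℕ → ℤ → 𝒞, (∀ p, MemOgamma γ (F p)) →
        (∀ ε > 0, ∃ N : ℕ, ∀ p ≥ N, ∀ q ≥ N,
          OgammaNorm γ c (fun n => F p n - F q n) ≤ ε) →
        ∃ A : ℤ → 𝒞, MemOgamma γ A ∧
          Tendsto (fun p => OgammaNorm γ c (fun n => F p n - A n)) atTop (𝓝 0)) := by
  constructor
  · -- submultiplicativity
    intro A B hA hB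
    have hrevconv : revS (convSeq A B) = convSeq (revS A) (revS B) := funext (rev_conv A B)
    have hmemconv : MemOgamma γ (convSeq A B) := by
      set D := Ssum A * Msup γ B + c * (Msup γ A * Msup γ B) + Msup γ A * Ssum B with hD
      set D' := Ssum (revS A) * Msup γ (revS B) + c * (Msup γ (revS A) * Msup γ (revS B))
        + Msup γ (revS A) * Ssum (revS B) with hD'
      refine memO_of_bound (C := max D D') fun n => ?_
      rcases le_or_gt 0 n with hn | hn
      · have h := (norm_conv_le hγ hA hB n).trans (key_bound hγ hc hcw hA hB hn)
        have : n.toNat = n.natAbs := by omega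
        rw [this] at h
        exact h.trans (mul_le_mul_of_nonneg_right (le_max_left _ _) (wSeq_pos γ _).le)
      · have hA' := memO_rev hA
        have hB' := memO_rev hB
        have h := (norm_conv_le hγ hA' hB' (-n)).trans
          (key_bound hγ hc hcw hA' hB' (n := -n) (by omega))
        rw [← rev_conv A B (-n)] at h
        have hrw : revS (convSeq A B) (-n) = convSeq A B n := by simp [revS]
        rw [hrw] at h
        have : (-n).toNat = n.natAbs := by omega
        rw [this] at h
        exact h.trans (mul_le_mul_of_nonneg_right (le_max_right _ _) (wSeq_pos γ _).le)
    refine ⟨hmemconv, ?_⟩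
    rw [ogammaNorm_eq, ogammaNorm_eq, ogammaNorm_eq]
    have hP := half_mul hγ hc hcw hA hB
    have hQ := half_mul hγ hc hcw (memO_rev hA) (memO_rev hB)
    rw [← hrevconv, Ssum_rev, Ssum_rev, Ssum_rev] at hQ
    have h1 : 0 ≤ Ssum A + c * Msup γ A :=
      add_nonneg (Ssum_nonneg A) (mul_nonneg hc.le (Msup_nonneg γ A))
    have h2 : 0 ≤ Ssum B + c * Msup γ B :=
      add_nonneg (Ssum_nonneg B) (mul_nonneg hc.le (Msup_nonneg γ B))
    have h3 : 0 ≤ Ssum A + c * Msup γ (revS A) :=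
      add_nonneg (Ssum_nonneg A) (mul_nonneg hc.le (Msup_nonneg γ _))
    have h4 : 0 ≤ Ssum B + c * Msup γ (revS B) :=
      add_nonneg (Ssum_nonneg B) (mul_nonneg hc.le (Msup_nonneg γ _))
    nlinarith [hP, hQ, h1, h2, h3, h4]
  · -- completeness
    intro F hF hCau
    have hsub : ∀ p q : ℕ, MemOgamma γ (fun m => F p m - F q m) :=
      fun p q => memO_sub (hF p) (hF q)
    have hnonneg : ∀ (X : ℤ → 𝒞), 0 ≤ OgammaNorm γ c X := by
      intro X
      rw [ogammaNorm_eq]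
      have := Ssum_nonneg X
      have := Msup_nonneg γ X
      have := Msup_nonneg γ (revS X)
      nlinarith [hc.le]
    have hcoef : ∀ (p q : ℕ) (n : ℤ),
        ‖F p n - F q n‖ ≤ OgammaNorm γ c (fun m => F p m - F q m) := by
      intro p q n
      have hs := summable_norm hγ (hsub p q)
      have h1 : ‖F p n - F q n‖ ≤ Ssum (fun m => F p m - F q m) :=
        Summable.le_tsum hs n (fun j _ => norm_nonneg _)
      rw [ogammaNorm_eq]
      have hm1 := Msup_nonneg γ (fun m => F p m - F q m)
      have hm2 := Msup_nonneg γ (revS (fun m => F p m - F q m))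
      have hS := Ssum_nonneg (fun m => F p m - F q m)
      nlinarith [hc.le]
    -- coefficientwise limits
    have hCS : ∀ n : ℤ, CauchySeq (fun p => F p n) := by
      intro n
      rw [Metric.cauchySeq_iff]
      intro ε hε
      obtain ⟨N, hN⟩ := hCau (ε / 2) (by linarith)
      refine ⟨N, fun p hp q hq => ?_⟩
      rw [dist_eq_norm]
      exact lt_of_le_of_lt ((hcoef p q n).trans (hN p hp q hq)) (by linarith)
    choose A hlim using fun n => cauchySeq_tendsto_of_complete (hCS n)
    -- the main estimate
    have main : ∀ ε > (0 : ℝ), ∃ N : ℕ, ∀ p ≥ N,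
        (Summable fun n : ℤ => ‖F p n - A n‖)
        ∧ (∑' n : ℤ, ‖F p n - A n‖) ≤ ε
        ∧ (∀ n : ℕ, ‖F p (n : ℤ) - A (n : ℤ)‖ ≤ ε / c * wSeq γ n)
        ∧ (∀ n : ℕ, ‖F p (-(n : ℤ)) - A (-(n : ℤ))‖ ≤ ε / c * wSeq γ n) := by
      intro ε hε
      obtain ⟨N, hN⟩ := hCau ε hε
      refine ⟨N, fun p hp => ?_⟩
      -- componentwise bounds for q ≥ N
      have hSle : ∀ q ≥ N, Ssum (fun m => F p m - F q m) ≤ ε := by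
        intro q hq
        have h := hN p hp q hq
        rw [ogammaNorm_eq] at h
        have hm1 := Msup_nonneg γ (fun m => F p m - F q m)
        have hm2 := Msup_nonneg γ (revS (fun m => F p m - F q m))
        have hS := Ssum_nonneg (fun m => F p m - F q m)
        nlinarith [hc.le]
      have hMP : ∀ q ≥ N, ∀ n : ℕ, ‖F p (n : ℤ) - F q (n : ℤ)‖ ≤ ε / c * wSeq γ n := by
        intro q hq n
        have h := hN p hp q hq
        rw [ogammaNorm_eq] at h
        have hS := Ssum_nonneg (fun m => F p m - F q m)
        have hm2 := Msup_nonneg γ (revS (fun m => F p m - F q m))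
        have hM : c * Msup γ (fun m => F p m - F q m) ≤ ε := by nlinarith
        have hle : Msup γ (fun m => F p m - F q m) ≤ ε / c :=
          (le_div_iff₀ hc).2 (by linarith [mul_comm c (Msup γ (fun m => F p m - F q m))])
        have hterm := le_ciSup (bddP (hsub p q)) n
        have := hterm.trans hle
        rw [div_le_iff₀ (wSeq_pos γ n)] at this
        exact this
      have hMN : ∀ q ≥ N, ∀ n : ℕ, ‖F p (-(n : ℤ)) - F q (-(n : ℤ))‖ ≤ ε / c * wSeq γ n := by
        intro q hq n
        have h := hN p hp q hq
        rw [ogammaNorm_eq] at h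
        have hS := Ssum_nonneg (fun m => F p m - F q m)
        have hm1 := Msup_nonneg γ (fun m => F p m - F q m)
        have hM : c * Msup γ (revS (fun m => F p m - F q m)) ≤ ε := by nlinarith
        have hle : Msup γ (revS (fun m => F p m - F q m)) ≤ ε / c :=
          (le_div_iff₀ hc).2
            (by linarith [mul_comm c (Msup γ (revS (fun m => F p m - F q m)))])
        have hterm := le_ciSup (bddP (memO_rev (hsub p q))) n
        have h2 := hterm.trans hle
        rw [div_le_iff₀ (wSeq_pos γ n)] at h2
        simpa [revS] using h2
      -- pass to the limit q → ∞
      have hlimnorm : ∀ n : ℤ, Tendsto (fun q => ‖F p n - F q n‖) atTop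
          (𝓝 ‖F p n - A n‖) := fun n => (tendsto_const_nhds.sub (hlim n)).norm
      have hfin : ∀ T : Finset ℤ, ∑ n ∈ T, ‖F p n - A n‖ ≤ ε := by
        intro T
        have htend : Tendsto (fun q => ∑ n ∈ T, ‖F p n - F q n‖) atTop
            (𝓝 (∑ n ∈ T, ‖F p n - A n‖)) :=
          tendsto_finset_sum _ fun n _ => hlimnorm n
        refine le_of_tendsto htend (eventually_atTop.2 ⟨N, fun q hq => ?_⟩)
        exact (Summable.sum_le_tsum T (fun j _ => norm_nonneg _)
          (summable_norm hγ (hsub p q))).trans (hSle q hq)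
      have hsumm : Summable fun n : ℤ => ‖F p n - A n‖ :=
        summable_of_sum_le (fun n => norm_nonneg _) hfin
      refine ⟨hsumm, Summable.tsum_le_of_sum_le hsumm hfin, fun n => ?_, fun n => ?_⟩
      · exact le_of_tendsto (hlimnorm (n : ℤ))
          (eventually_atTop.2 ⟨N, fun q hq => hMP q hq n⟩)
      · exact le_of_tendsto (hlimnorm (-(n : ℤ)))
          (eventually_atTop.2 ⟨N, fun q hq => hMN q hq n⟩)
    -- A is in the space
    obtain ⟨N₁, hN₁⟩ := main 1 one_pos
    obtain ⟨_, _, hP1, hM1⟩ := hN₁ N₁ le_rfl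
    have hxmem : MemOgamma γ (fun n => F N₁ n - A n) := by
      refine memO_of_bound (C := 1 / c) fun n => ?_
      rcases le_or_gt 0 n with hn | hn
      · have h := hP1 n.natAbs
        rwa [show ((n.natAbs : ℕ) : ℤ) = n by omega] at h
      · have h := hM1 n.natAbs
        rwa [show -((n.natAbs : ℕ) : ℤ) = n by omega] at h
    have hmemA : MemOgamma γ A := by
      have h := memO_sub (hF N₁) hxmem
      obtain ⟨C, hC⟩ := h
      exact ⟨C, fun n => by simpa using hC n⟩
    refine ⟨A, hmemA, ?_⟩
    rw [Metric.tendsto_atTop]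
    intro ε hε
    obtain ⟨N, hN⟩ := main (ε / 8) (by linarith)
    refine ⟨N, fun p hp => ?_⟩
    obtain ⟨hsumm, hS, hP, hM⟩ := hN p hp
    set x : ℤ → 𝒞 := fun n => F p n - A n with hx
    have hMsupP : c * Msup γ x ≤ ε / 8 := by
      have h1 : Msup γ x ≤ ε / 8 / c := by
        refine ciSup_le fun n => ?_
        rw [div_le_iff₀ (wSeq_pos γ n)]
        exact hP n
      calc c * Msup γ x ≤ c * (ε / 8 / c) := mul_le_mul_of_nonneg_left h1 hc.le
        _ = ε / 8 := by field_simp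
    have hMsupN : c * Msup γ (revS x) ≤ ε / 8 := by
      have h1 : Msup γ (revS x) ≤ ε / 8 / c := by
        refine ciSup_le fun n => ?_
        rw [div_le_iff₀ (wSeq_pos γ n)]
        have h := hM n
        calc ‖revS x (n : ℤ)‖ = ‖F p (-(n : ℤ)) - A (-(n : ℤ))‖ := by simp [revS, hx]
          _ ≤ ε / 8 / c * wSeq γ n := hM n
      calc c * Msup γ (revS x) ≤ c * (ε / 8 / c) := mul_le_mul_of_nonneg_left h1 hc.le
        _ = ε / 8 := by field_simp
    have hSx : Ssum x ≤ ε / 8 := hS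
    have hNle : OgammaNorm γ c x ≤ ε / 2 := by
      rw [ogammaNorm_eq]
      linarith
    have hN0 : 0 ≤ OgammaNorm γ c x := hnonneg x
    rw [Real.dist_eq, sub_zero, abs_of_nonneg hN0]
    linarith
end

section
/- The characters (nonzero algebra homomorphisms to ℂ) of the commutative Banach algebra 𝒪_γ(ℂ) of two-sided series Σ a_n z^n with |a_n| = O(1/(|n|+1)^γ), γ > 1, are exactly the evaluation maps χ_λ(a) = Σ_{n∈ℤ} a_n λ^n for λ ∈ S¹. -/
/-- Membership in `𝒪_γ(ℂ)`. -/
def MemOgammaC (γ : ℝ) (a : ℤ → ℂ) : Prop :=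
  ∃ C : ℝ, ∀ n : ℤ, ‖a n‖ ≤ C / ((|n| : ℝ) + 1) ^ γ

/-- Convolution product. -/
noncomputable def convC (a b : ℤ → ℂ) (n : ℤ) : ℂ := ∑' k : ℤ, a k * b (n - k)

/-- The unit of `𝒪_γ(ℂ)`. -/
def deltaC : ℤ → ℂ := fun n => if n = 0 then 1 else 0

/-- A character of `𝒪_γ(ℂ)`. -/
structure IsCharOgamma (γ : ℝ) (χ : (ℤ → ℂ) → ℂ) : Prop where
  map_add : ∀ a b, MemOgammaC γ a → MemOgammaC γ b → χ (a + b) = χ a + χ b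
  map_smul : ∀ (s : ℂ) a, MemOgammaC γ a → χ (s • a) = s * χ a
  map_mul : ∀ a b, MemOgammaC γ a → MemOgammaC γ b → χ (convC a b) = χ a * χ b
  map_one : χ deltaC = 1


noncomputable section
namespace OG


variable {γ : ℝ}

/-- weight -/
def wt (γ : ℝ) (n : ℤ) : ℝ := ((|n| : ℝ) + 1) ^ γ

lemma base_pos (n : ℤ) : (0:ℝ) < (|n| : ℝ) + 1 := by positivity

lemma one_le_base (n : ℤ) : (1:ℝ) ≤ (|n| : ℝ) + 1 := by
  have : (0:ℝ) ≤ |(n : ℝ)| := abs_nonneg _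
  linarith

lemma wt_pos (n : ℤ) : 0 < wt γ n := Real.rpow_pos_of_pos (base_pos n) _

lemma one_le_wt (hγ : 0 ≤ γ) (n : ℤ) : 1 ≤ wt γ n :=
  Real.one_le_rpow (one_le_base n) hγ

lemma inv_wt_le_one (hγ : 0 ≤ γ) (n : ℤ) : (wt γ n)⁻¹ ≤ 1 := by
  rw [inv_le_one_iff₀]; right; exact one_le_wt hγ n

lemma inv_wt_nonneg (n : ℤ) : 0 ≤ (wt γ n)⁻¹ := le_of_lt (inv_pos.2 (wt_pos n))

lemma wt_zero : wt γ 0 = 1 := by simp [wt, Real.one_rpow]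

/-- the key doubling bound : wt n ≤ 2^γ * max (wt k) (wt (n-k)) -/
lemma wt_le_two_mul_max (hγ : 0 ≤ γ) (n k : ℤ) :
    wt γ n ≤ (2:ℝ)^γ * max (wt γ k) (wt γ (n - k)) := by
  simp only [wt]
  have hb : (|(n:ℝ)| + 1) ≤ 2 * max (|(k:ℝ)| + 1) (|((n - k : ℤ) : ℝ)| + 1) := by
    have h1' : |(n:ℝ)| ≤ |(k:ℝ)| + |((n - k : ℤ):ℝ)| := by
      push_cast
      have := abs_add_le (k : ℝ) ((n : ℝ) - k); simpa using this
    rcases le_total (|(k:ℝ)| + 1) (|((n - k : ℤ):ℝ)| + 1) with h | h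
    · rw [max_eq_right h]; nlinarith
    · rw [max_eq_left h]; nlinarith
  have hmax : max ((|(k:ℝ)| + 1) ^ γ) ((|((n - k:ℤ):ℝ)| + 1) ^ γ)
      = (max (|(k:ℝ)| + 1) (|((n - k:ℤ):ℝ)| + 1)) ^ γ := by
    rcases le_total (|(k:ℝ)| + 1) (|((n - k:ℤ):ℝ)| + 1) with h | h
    · rw [max_eq_right h, max_eq_right (Real.rpow_le_rpow (le_of_lt (base_pos k)) h hγ)]
    · rw [max_eq_left h, max_eq_left (Real.rpow_le_rpow (le_of_lt (base_pos (n-k))) h hγ)]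
  calc (|(n:ℝ)| + 1) ^ γ ≤ (2 * max (|(k:ℝ)| + 1) (|((n - k:ℤ):ℝ)| + 1)) ^ γ :=
        Real.rpow_le_rpow (le_of_lt (base_pos n)) hb hγ
    _ = (2:ℝ)^γ * max ((|(k:ℝ)| + 1) ^ γ) ((|((n - k:ℤ):ℝ)| + 1) ^ γ) := by
        rw [Real.mul_rpow (by norm_num) (le_trans zero_le_one (le_max_of_le_left (one_le_base k))), hmax]

lemma summable_inv_wt (hγ : 1 < γ) : Summable (fun n : ℤ => (wt γ n)⁻¹) := by
  have h1 : Summable (fun n : ℤ => |(n : ℝ)| ^ (-γ)) := Real.summable_abs_int_rpow hγ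
  have h2 : Summable (fun n : ℤ => if n = 0 then (1:ℝ) else 0) := by
    apply summable_of_ne_finset_zero (s := {0})
    intro n hn
    simp at hn; simp [hn]
  apply Summable.of_nonneg_of_le (fun n => inv_wt_nonneg n)
    (f := fun n : ℤ => |(n : ℝ)| ^ (-γ) + if n = 0 then (1:ℝ) else 0) _ (h1.add h2)
  intro n
  by_cases hn : n = 0
  · subst hn
    simp [wt_zero, Real.zero_rpow (by linarith : -γ ≠ 0)]
  · have hge : (1:ℝ) ≤ |(n : ℝ)| := by
      have h1 : (1:ℤ) ≤ |n| := Int.one_le_abs (by exact_mod_cast hn)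
      have : ((1:ℤ):ℝ) ≤ ((|n|:ℤ):ℝ) := by exact_mod_cast h1
      simpa [Int.cast_abs] using this
    simp only [hn, if_false, add_zero]
    rw [Real.rpow_neg (by linarith)]
    apply inv_anti₀ (Real.rpow_pos_of_pos (by linarith) _)
    exact Real.rpow_le_rpow (by linarith) (by linarith) (by linarith)



variable {γ : ℝ}

/-- domination -/
def Dom (γ : ℝ) (C : ℝ) (a : ℤ → ℂ) : Prop := ∀ n : ℤ, ‖a n‖ ≤ C * (wt γ n)⁻¹

lemma Dom.nonneg {C : ℝ} {a : ℤ → ℂ} (h : Dom γ C a) : 0 ≤ C := by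
  have h0 := h 0
  rw [wt_zero] at h0
  simpa using le_trans (norm_nonneg _) h0

lemma Dom.mono {C C' : ℝ} {a : ℤ → ℂ} (h : Dom γ C a) (hle : C ≤ C') : Dom γ C' a :=
  fun n => le_trans (h n) (mul_le_mul_of_nonneg_right hle (inv_wt_nonneg n))

lemma mem_iff_dom {a : ℤ → ℂ} : MemOgammaC γ a ↔ ∃ C, Dom γ C a := by
  constructor
  · rintro ⟨C, hC⟩
    exact ⟨C, fun n => by rw [← div_eq_mul_inv]; exact hC n⟩
  · rintro ⟨C, hC⟩
    exact ⟨C, fun n => by rw [div_eq_mul_inv]; exact hC n⟩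

lemma Dom.memOgammaC {C : ℝ} {a : ℤ → ℂ} (h : Dom γ C a) : MemOgammaC γ a :=
  mem_iff_dom.2 ⟨C, h⟩

lemma Dom.summable_norm (hγ : 1 < γ) {C : ℝ} {a : ℤ → ℂ} (h : Dom γ C a) :
    Summable (fun n => ‖a n‖) :=
  Summable.of_nonneg_of_le (fun n => norm_nonneg _) h ((summable_inv_wt hγ).mul_left C)

lemma Dom.le_const (hγ : 0 ≤ γ) {C : ℝ} {a : ℤ → ℂ} (h : Dom γ C a) (n : ℤ) : ‖a n‖ ≤ C :=
  le_trans (h n) (by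
    calc C * (wt γ n)⁻¹ ≤ C * 1 := mul_le_mul_of_nonneg_left (inv_wt_le_one hγ n) h.nonneg
      _ = C := mul_one C)

lemma hγ0 : (1:ℝ) < γ → 0 ≤ γ := fun h => le_of_lt (lt_trans zero_lt_one h)

lemma inv_le_of_le_mul {x y c : ℝ} (hx : 0 < x) (hy : 0 < y) (h : x ≤ c * y) :
    y⁻¹ ≤ c * x⁻¹ := by
  have h1 : y⁻¹ * x ≤ y⁻¹ * (c * y) := mul_le_mul_of_nonneg_left h (le_of_lt (inv_pos.2 hy))
  have h2 : y⁻¹ * (c * y) = c := by field_simp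
  have h3 : y⁻¹ * x ≤ c := h2 ▸ h1
  calc y⁻¹ = (y⁻¹ * x) * x⁻¹ := by field_simp
    _ ≤ c * x⁻¹ := mul_le_mul_of_nonneg_right h3 (le_of_lt (inv_pos.2 hx))

section conv
variable {A B : ℝ} {a b : ℤ → ℂ}

lemma summable_shift (hs : Summable (fun n => ‖b n‖)) (n : ℤ) :
    Summable (fun k : ℤ => ‖b (n - k)‖) := by
  have := ((Equiv.subLeft n).summable_iff (f := fun m => ‖b m‖)).2 hs
  simpa [Function.comp_def] using this

lemma tsum_shift (hs : Summable (fun n => ‖b n‖)) (n : ℤ) :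
    ∑' k : ℤ, ‖b (n - k)‖ = ∑' m, ‖b m‖ := by
  have := (Equiv.subLeft n).tsum_eq (f := fun m => ‖b m‖)
  simpa using this

/-- summability of the convolution integrand -/
lemma summable_conv_term (hγ : 1 < γ) (ha : Dom γ A a) (hb : Dom γ B b) (n : ℤ) :
    Summable (fun k => ‖a k * b (n - k)‖) := by
  apply Summable.of_nonneg_of_le (fun k => norm_nonneg _) (f := fun k => ‖a k‖ * B)
  · intro k
    rw [norm_mul]
    exact mul_le_mul_of_nonneg_left (hb.le_const (hγ0 hγ) (n - k)) (norm_nonneg _)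
  · exact (ha.summable_norm hγ).mul_right B

/-- pointwise weighted bound on convolution terms -/
lemma conv_term_bound (hγ : 1 < γ) (ha : Dom γ A a) (hb : Dom γ B b) (n k : ℤ) :
    ‖a k * b (n - k)‖ ≤ ((2:ℝ)^γ * (wt γ n)⁻¹) * (‖a k‖ * B + A * ‖b (n - k)‖) := by
  have h2 : (0:ℝ) < (2:ℝ)^γ := Real.rpow_pos_of_pos (by norm_num) _
  have hwn : (0:ℝ) < wt γ n := wt_pos n
  have key := wt_le_two_mul_max (hγ0 hγ) n k
  rw [norm_mul]
  rcases le_total (wt γ k) (wt γ (n - k)) with h | h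
  · rw [max_eq_right h] at key
    have hinv : (wt γ (n - k))⁻¹ ≤ (2:ℝ)^γ * (wt γ n)⁻¹ :=
      inv_le_of_le_mul hwn (wt_pos (n - k)) key
    calc ‖a k‖ * ‖b (n - k)‖ ≤ ‖a k‖ * (B * (wt γ (n - k))⁻¹) :=
          mul_le_mul_of_nonneg_left (hb (n - k)) (norm_nonneg _)
      _ ≤ ‖a k‖ * (B * ((2:ℝ)^γ * (wt γ n)⁻¹)) :=
          mul_le_mul_of_nonneg_left (mul_le_mul_of_nonneg_left hinv hb.nonneg) (norm_nonneg _)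
      _ = ((2:ℝ)^γ * (wt γ n)⁻¹) * (‖a k‖ * B) := by ring
      _ ≤ ((2:ℝ)^γ * (wt γ n)⁻¹) * (‖a k‖ * B + A * ‖b (n - k)‖) := by
          have h4 : 0 ≤ A * ‖b (n - k)‖ := mul_nonneg ha.nonneg (norm_nonneg _)
          have h5 : (0:ℝ) ≤ (2:ℝ)^γ * (wt γ n)⁻¹ := by positivity
          nlinarith
  · rw [max_eq_left h] at key
    have hinv : (wt γ k)⁻¹ ≤ (2:ℝ)^γ * (wt γ n)⁻¹ :=
      inv_le_of_le_mul hwn (wt_pos k) key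
    calc ‖a k‖ * ‖b (n - k)‖ ≤ (A * (wt γ k)⁻¹) * ‖b (n - k)‖ :=
          mul_le_mul_of_nonneg_right (ha k) (norm_nonneg _)
      _ ≤ (A * ((2:ℝ)^γ * (wt γ n)⁻¹)) * ‖b (n - k)‖ :=
          mul_le_mul_of_nonneg_right (mul_le_mul_of_nonneg_left hinv ha.nonneg) (norm_nonneg _)
      _ = ((2:ℝ)^γ * (wt γ n)⁻¹) * (A * ‖b (n - k)‖) := by ring
      _ ≤ ((2:ℝ)^γ * (wt γ n)⁻¹) * (‖a k‖ * B + A * ‖b (n - k)‖) := by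
          have h4 : 0 ≤ ‖a k‖ * B := mul_nonneg (norm_nonneg _) hb.nonneg
          have h5 : (0:ℝ) ≤ (2:ℝ)^γ * (wt γ n)⁻¹ := by positivity
          nlinarith

/-- weighted bound on convolution -/
lemma conv_dom (hγ : 1 < γ) (ha : Dom γ A a) (hb : Dom γ B b) :
    Dom γ ((2:ℝ)^γ * ((∑' n, ‖a n‖) * B + A * (∑' n, ‖b n‖))) (convC a b) := by
  intro n
  have hsum := summable_conv_term hγ ha hb n
  have hb2 : Summable (fun k : ℤ => ‖b (n - k)‖) := summable_shift (hb.summable_norm hγ) n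
  have h1 : Summable (fun k : ℤ => ‖a k‖ * B) := (ha.summable_norm hγ).mul_right B
  have h2 : Summable (fun k : ℤ => A * ‖b (n - k)‖) := hb2.mul_left A
  have hmaj : Summable (fun k : ℤ => ((2:ℝ)^γ * (wt γ n)⁻¹) * (‖a k‖ * B + A * ‖b (n - k)‖)) :=
    (h1.add h2).mul_left _
  calc ‖convC a b n‖ ≤ ∑' k, ‖a k * b (n - k)‖ := norm_tsum_le_tsum_norm hsum
    _ ≤ ∑' k, ((2:ℝ)^γ * (wt γ n)⁻¹) * (‖a k‖ * B + A * ‖b (n - k)‖) :=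
        Summable.tsum_le_tsum (fun k => conv_term_bound hγ ha hb n k) hsum hmaj
    _ = ((2:ℝ)^γ * (wt γ n)⁻¹) * ((∑' k, ‖a k‖ * B) + ∑' k, A * ‖b (n - k)‖) := by
        rw [tsum_mul_left, Summable.tsum_add h1 h2]
    _ = ((2:ℝ)^γ * ((∑' n, ‖a n‖) * B + A * (∑' n, ‖b n‖))) * (wt γ n)⁻¹ := by
        rw [tsum_mul_right, tsum_mul_left, tsum_shift (hb.summable_norm hγ) n]
        ring

end conv


/-- the reindexing equivalence (k, m) ↦ (k + m, k) -/
def shiftE : ℤ × ℤ ≃ ℤ × ℤ where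
  toFun p := (p.1 + p.2, p.1)
  invFun q := (q.2, q.1 - q.2)
  left_inv p := by simp
  right_inv q := by simp

variable {a b : ℤ → ℂ}

lemma summable_G (Sa : Summable (fun n => ‖a n‖)) (Sb : Summable (fun n => ‖b n‖)) :
    Summable (fun p : ℤ × ℤ => ‖a p.2‖ * ‖b (p.1 - p.2)‖) := by
  have hF : Summable (fun p : ℤ × ℤ => ‖a p.1‖ * ‖b p.2‖) :=
    Sa.mul_of_nonneg Sb (fun n => norm_nonneg _) (fun n => norm_nonneg _)
  have := (shiftE.summable_iff
    (f := fun p : ℤ × ℤ => ‖a p.2‖ * ‖b (p.1 - p.2)‖)).1 ?_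
  · exact this
  · apply Summable.congr hF
    intro p
    simp [shiftE]

lemma tsum_G (Sa : Summable (fun n => ‖a n‖)) (Sb : Summable (fun n => ‖b n‖)) :
    ∑' p : ℤ × ℤ, ‖a p.2‖ * ‖b (p.1 - p.2)‖ = (∑' n, ‖a n‖) * (∑' n, ‖b n‖) := by
  have h1 : (∑' n, ‖a n‖) * (∑' n, ‖b n‖) = ∑' p : ℤ × ℤ, ‖a p.1‖ * ‖b p.2‖ := by
    apply tsum_mul_tsum_of_summable_norm
    · simpa using Sa
    · simpa using Sb
  rw [h1]
  rw [← shiftE.tsum_eq (f := fun p : ℤ × ℤ => ‖a p.2‖ * ‖b (p.1 - p.2)‖)]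
  apply tsum_congr
  intro p
  simp [shiftE]

/-- marginal sums: g n = ∑' k, ‖a k‖ * ‖b (n - k)‖ has sum (∑‖a‖)(∑‖b‖) -/
lemma hasSum_marginal (Sa : Summable (fun n => ‖a n‖)) (Sb : Summable (fun n => ‖b n‖)) :
    HasSum (fun n : ℤ => ∑' k : ℤ, ‖a k‖ * ‖b (n - k)‖) ((∑' n, ‖a n‖) * (∑' n, ‖b n‖)) := by
  have hG := summable_G Sa Sb
  have := hG.hasSum.prod_fiberwise (g := fun n => ∑' k : ℤ, ‖a k‖ * ‖b (n - k)‖) ?_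
  · rwa [tsum_G Sa Sb] at this
  · intro n
    exact (hG.prod_factor n).hasSum

lemma conv_l1 (Sa : Summable (fun n => ‖a n‖)) (Sb : Summable (fun n => ‖b n‖))
    (hterm : ∀ n, Summable (fun k => ‖a k * b (n - k)‖)) :
    Summable (fun n => ‖convC a b n‖) ∧
      ∑' n, ‖convC a b n‖ ≤ (∑' n, ‖a n‖) * (∑' n, ‖b n‖) := by
  have hmarg := hasSum_marginal Sa Sb
  have hle : ∀ n, ‖convC a b n‖ ≤ ∑' k : ℤ, ‖a k‖ * ‖b (n - k)‖ := by
    intro n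
    calc ‖convC a b n‖ ≤ ∑' k, ‖a k * b (n - k)‖ := norm_tsum_le_tsum_norm (hterm n)
      _ = ∑' k : ℤ, ‖a k‖ * ‖b (n - k)‖ := tsum_congr (fun k => norm_mul _ _)
  have hs : Summable (fun n => ‖convC a b n‖) :=
    Summable.of_nonneg_of_le (fun n => norm_nonneg _) hle hmarg.summable
  refine ⟨hs, ?_⟩
  calc ∑' n, ‖convC a b n‖ ≤ ∑' n, ∑' k : ℤ, ‖a k‖ * ‖b (n - k)‖ :=
        Summable.tsum_le_tsum hle hs hmarg.summable
    _ = (∑' n, ‖a n‖) * (∑' n, ‖b n‖) := hmarg.tsum_eq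


variable {γ : ℝ}




lemma dom_delta : Dom γ 1 deltaC := by
  intro n
  by_cases hn : n = 0
  · subst hn; simp [deltaC, wt_zero]
  · simp only [deltaC, hn, if_false, norm_zero, one_mul]
    exact inv_wt_nonneg n

lemma summable_norm_delta : Summable (fun n : ℤ => ‖deltaC n‖) := by
  apply summable_of_ne_finset_zero (s := ({0} : Finset ℤ))
  intro n hn
  simp at hn
  simp [deltaC, hn]

lemma tsum_norm_delta : ∑' n : ℤ, ‖deltaC n‖ = 1 := by
  rw [tsum_eq_single 0 (fun n hn => by simp [deltaC, hn])]
  simp [deltaC]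

lemma dom_add {C D : ℝ} {a b : ℤ → ℂ} (ha : Dom γ C a) (hb : Dom γ D b) :
    Dom γ (C + D) (a + b) := by
  intro n
  calc ‖(a + b) n‖ ≤ ‖a n‖ + ‖b n‖ := norm_add_le _ _
    _ ≤ C * (wt γ n)⁻¹ + D * (wt γ n)⁻¹ := add_le_add (ha n) (hb n)
    _ = (C + D) * (wt γ n)⁻¹ := by ring

lemma dom_smul {C : ℝ} {a : ℤ → ℂ} (s : ℂ) (ha : Dom γ C a) :
    Dom γ (‖s‖ * C) (s • a) := by
  intro n
  rw [Pi.smul_apply, norm_smul, mul_assoc]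
  exact mul_le_mul_of_nonneg_left (ha n) (norm_nonneg s)

/-- powers -/
def pw (a : ℤ → ℂ) : ℕ → ℤ → ℂ
  | 0 => deltaC
  | (k+1) => convC a (pw a k)

/-- recursive constants -/
def Dconst (γ A A₁ : ℝ) : ℕ → ℝ
  | 0 => 1
  | (k+1) => (2:ℝ)^γ * (A₁ * Dconst γ A A₁ k + A * A₁^k)

lemma pw_facts (hγ : 1 < γ) {A : ℝ} {a : ℤ → ℂ} (ha : Dom γ A a) (k : ℕ) :
    Dom γ (Dconst γ A (∑' n, ‖a n‖) k) (pw a k) ∧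
      Summable (fun n => ‖pw a k n‖) ∧
      ∑' n, ‖pw a k n‖ ≤ (∑' n, ‖a n‖)^k := by
  set A₁ := ∑' n, ‖a n‖ with hA₁
  have Sa := ha.summable_norm hγ
  induction k with
  | zero =>
    refine ⟨by simpa [Dconst, pw] using dom_delta, ?_, ?_⟩
    · show Summable (fun n => ‖deltaC n‖)
      exact summable_norm_delta
    · show ∑' n, ‖deltaC n‖ ≤ A₁ ^ 0
      rw [tsum_norm_delta]; simp
  | succ k ih =>
    obtain ⟨ihd, ihs, ihl⟩ := ih
    have hterm := summable_conv_term hγ ha ihd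
    have hl1 := conv_l1 Sa ihs hterm
    refine ⟨?_, hl1.1, ?_⟩
    · have := conv_dom hγ ha ihd
      apply this.mono
      simp only [Dconst]
      have h2 : (0:ℝ) ≤ (2:ℝ)^γ := le_of_lt (Real.rpow_pos_of_pos (by norm_num) _)
      apply mul_le_mul_of_nonneg_left _ h2
      have := mul_le_mul_of_nonneg_left ihl ha.nonneg
      linarith
    · calc ∑' n, ‖pw a (k+1) n‖ ≤ A₁ * ∑' n, ‖pw a k n‖ := hl1.2
        _ ≤ A₁ * A₁^k := by
            apply mul_le_mul_of_nonneg_left ihl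
            rw [hA₁]; exact tsum_nonneg (fun n => norm_nonneg _)
        _ = A₁^(k+1) := by ring

lemma Dconst_le (hγ : 1 < γ) {A A₁ : ℝ} (hA : 0 ≤ A) (hA₁ : 0 < A₁) (k : ℕ) :
    Dconst γ A A₁ k ≤ (k+1 : ℝ) * ((2:ℝ)^γ * A₁)^k * max (A / A₁) 1 := by
  have h2 : (1:ℝ) ≤ (2:ℝ)^γ := Real.one_le_rpow (by norm_num) (hγ0 hγ)
  have h2' : (0:ℝ) < (2:ℝ)^γ := lt_of_lt_of_le zero_lt_one h2
  set E := max (A / A₁) 1 with hE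
  have hE1 : (1:ℝ) ≤ E := le_max_right _ _
  have hAE : A ≤ E * A₁ := by
    have : A / A₁ ≤ E := le_max_left _ _
    calc A = (A / A₁) * A₁ := by field_simp
      _ ≤ E * A₁ := mul_le_mul_of_nonneg_right this (le_of_lt hA₁)
  induction k with
  | zero => simpa [Dconst] using hE1
  | succ k ih =>
    have hA1k : (0:ℝ) ≤ A₁^k := le_of_lt (pow_pos hA₁ k)
    have hA1k1 : (0:ℝ) ≤ A₁^(k+1) := le_of_lt (pow_pos hA₁ (k+1))
    have e1 : ((2:ℝ)^γ * A₁)^(k+1) = ((2:ℝ)^γ)^(k+1) * A₁^(k+1) := mul_pow _ _ _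
    have h2k : (2:ℝ)^γ ≤ ((2:ℝ)^γ)^(k+1) := le_self_pow₀ h2 (Nat.succ_ne_zero k)
    calc Dconst γ A A₁ (k+1) = (2:ℝ)^γ * (A₁ * Dconst γ A A₁ k + A * A₁^k) := rfl
      _ ≤ (2:ℝ)^γ * (A₁ * ((k+1 : ℝ) * ((2:ℝ)^γ * A₁)^k * E) + (E * A₁) * A₁^k) := by
          apply mul_le_mul_of_nonneg_left _ (le_of_lt h2')
          apply add_le_add
          · apply mul_le_mul_of_nonneg_left ih (le_of_lt hA₁)
          · exact mul_le_mul_of_nonneg_right hAE hA1k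
      _ = (k+1 : ℝ) * ((2:ℝ)^γ * A₁)^(k+1) * E + E * ((2:ℝ)^γ * A₁^(k+1)) := by
          rw [pow_succ]; ring
      _ ≤ (k+1 : ℝ) * ((2:ℝ)^γ * A₁)^(k+1) * E + E * ((2:ℝ)^γ * A₁)^(k+1) := by
          apply add_le_add_right
          apply mul_le_mul_of_nonneg_left _ (le_trans zero_le_one hE1)
          rw [e1]
          exact mul_le_mul_of_nonneg_right h2k hA1k1
      _ = ((k:ℝ)+1+1) * ((2:ℝ)^γ * A₁)^(k+1) * E := by ring
      _ = ((k+1 : ℕ)+1 : ℝ) * ((2:ℝ)^γ * A₁)^(k+1) * E := by push_cast; ring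

lemma two_rpow_pos : (0:ℝ) < (2:ℝ)^γ := Real.rpow_pos_of_pos (by norm_num) _

/-- Neumann series inverse -/
lemma exists_inverse (hγ : 1 < γ) {A : ℝ} {a : ℤ → ℂ} (ha : Dom γ A a)
    (hA₁ : 0 < ∑' n, ‖a n‖) {w : ℂ} (hw : (2:ℝ)^γ * (∑' n, ‖a n‖) < ‖w‖) :
    ∃ b : ℤ → ℂ, MemOgammaC γ b ∧ convC (w • deltaC - a) b = deltaC := by
  set A₁ := ∑' n, ‖a n‖ with hA₁def
  have Sa := ha.summable_norm hγ
  have h2' : (0:ℝ) < (2:ℝ)^γ := two_rpow_pos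
  have hwpos : (0:ℝ) < ‖w‖ := lt_trans (mul_pos h2' hA₁) hw
  have hw0 : w ≠ 0 := by
    intro h; rw [h, norm_zero] at hwpos; exact lt_irrefl 0 hwpos
  set E := max (A / A₁) 1 with hE
  have hE0 : (0:ℝ) < E := lt_of_lt_of_le zero_lt_one (le_max_right _ _)
  set ρ : ℝ := (2:ℝ)^γ * A₁ / ‖w‖ with hρ
  have hρ0 : 0 ≤ ρ := div_nonneg (le_of_lt (mul_pos h2' hA₁)) (le_of_lt hwpos)
  have hρ1 : ρ < 1 := (div_lt_one hwpos).2 hw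
  -- the constants
  set c : ℕ → ℝ := fun k => ‖w⁻¹‖^(k+1) * Dconst γ A A₁ k with hc
  have hcnonneg : ∀ k, 0 ≤ c k := by
    intro k
    exact mul_nonneg (pow_nonneg (norm_nonneg _) _) ((pw_facts hγ ha k).1.nonneg)
  have hcle : ∀ k, c k ≤ (‖w‖⁻¹ * E) * ((k+1 : ℝ) * ρ^k) := by
    intro k
    have hD := Dconst_le hγ ha.nonneg hA₁ k
    have : c k ≤ ‖w⁻¹‖^(k+1) * ((k+1 : ℝ) * ((2:ℝ)^γ * A₁)^k * E) :=
      mul_le_mul_of_nonneg_left hD (pow_nonneg (norm_nonneg _) _)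
    refine le_trans this (le_of_eq ?_)
    rw [norm_inv]
    have : ‖w‖⁻¹^(k+1) = ‖w‖⁻¹ * ‖w‖⁻¹^k := pow_succ' _ _
    rw [this]
    have hρk : ‖w‖⁻¹^k * ((2:ℝ)^γ * A₁)^k = ρ^k := by
      rw [hρ, div_pow]
      rw [div_eq_mul_inv, inv_pow]
      ring
    calc ‖w‖⁻¹ * ‖w‖⁻¹ ^ k * ((k+1 : ℝ) * ((2:ℝ)^γ * A₁)^k * E)
        = (‖w‖⁻¹ * E) * ((k+1 : ℝ) * (‖w‖⁻¹^k * ((2:ℝ)^γ * A₁)^k)) := by ring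
      _ = (‖w‖⁻¹ * E) * ((k+1 : ℝ) * ρ^k) := by rw [hρk]
  have hgeom : Summable (fun k : ℕ => (k+1 : ℝ) * ρ^k) := by
    have h1 : Summable (fun k : ℕ => (k : ℝ)^1 * ρ^k) := by
      apply summable_pow_mul_geometric_of_norm_lt_one
      rw [Real.norm_eq_abs, abs_of_nonneg hρ0]; exact hρ1
    have h2 : Summable (fun k : ℕ => ρ^k) := summable_geometric_of_lt_one hρ0 hρ1
    have := (h1.add h2)
    apply this.congr
    intro k; simp; ring
  have hcs : Summable c :=
    Summable.of_nonneg_of_le hcnonneg hcle (hgeom.mul_left _)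
  -- the inverse
  set b : ℤ → ℂ := fun n => ∑' k : ℕ, (w⁻¹)^(k+1) * pw a k n with hb
  have htermb : ∀ n k, ‖(w⁻¹)^(k+1) * pw a k n‖ ≤ c k * (wt γ n)⁻¹ := by
    intro n k
    rw [norm_mul, norm_pow, hc]
    calc ‖w⁻¹‖^(k+1) * ‖pw a k n‖
        ≤ ‖w⁻¹‖^(k+1) * (Dconst γ A A₁ k * (wt γ n)⁻¹) :=
          mul_le_mul_of_nonneg_left ((pw_facts hγ ha k).1 n) (pow_nonneg (norm_nonneg _) _)
      _ = ‖w⁻¹‖^(k+1) * Dconst γ A A₁ k * (wt γ n)⁻¹ := by ring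
  have hsummandb : ∀ n : ℤ, Summable (fun k : ℕ => (w⁻¹)^(k+1) * pw a k n) := by
    intro n
    apply Summable.of_norm
    apply Summable.of_nonneg_of_le (fun k => norm_nonneg _) (fun k => htermb n k)
    exact hcs.mul_right _
  have hbdom : Dom γ (∑' k, c k) b := by
    intro n
    calc ‖b n‖ ≤ ∑' k : ℕ, ‖(w⁻¹)^(k+1) * pw a k n‖ := by
          apply norm_tsum_le_tsum_norm
          apply Summable.of_nonneg_of_le (fun k => norm_nonneg _) (fun k => htermb n k)
          exact hcs.mul_right _
      _ ≤ ∑' k : ℕ, c k * (wt γ n)⁻¹ := by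
          apply Summable.tsum_le_tsum (fun k => htermb n k)
          · apply Summable.of_nonneg_of_le (fun k => norm_nonneg _) (fun k => htermb n k)
            exact hcs.mul_right _
          · exact hcs.mul_right _
      _ = (∑' k, c k) * (wt γ n)⁻¹ := tsum_mul_right
  -- the key computation : convC a b = w • b - deltaC
  have hab : ∀ n, convC a b n = w * b n - deltaC n := by
    intro n
    have hF : Summable (fun p : ℤ × ℕ => a p.1 * ((w⁻¹)^(p.2+1) * pw a p.2 (n - p.1))) := by
      apply Summable.of_norm
      apply Summable.of_nonneg_of_le (fun p => norm_nonneg _)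
        (f := fun p : ℤ × ℕ => ‖a p.1‖ * c p.2)
      · intro p
        rw [norm_mul]
        apply mul_le_mul_of_nonneg_left _ (norm_nonneg _)
        exact le_trans (htermb (n - p.1) p.2)
          (by calc c p.2 * (wt γ (n - p.1))⁻¹ ≤ c p.2 * 1 :=
                mul_le_mul_of_nonneg_left (inv_wt_le_one (hγ0 hγ) _) (hcnonneg p.2)
            _ = c p.2 := mul_one _)
      · exact Sa.mul_of_nonneg hcs (fun m => norm_nonneg _) hcnonneg
    have hswap : ∑' m : ℤ, ∑' k : ℕ, a m * ((w⁻¹)^(k+1) * pw a k (n - m))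
        = ∑' k : ℕ, ∑' m : ℤ, a m * ((w⁻¹)^(k+1) * pw a k (n - m)) := by
      exact (Summable.tsum_comm (f := fun (m : ℤ) (k : ℕ) => a m * ((w⁻¹)^(k+1) * pw a k (n - m))) hF).symm
    have hinner : ∀ k : ℕ, ∑' m : ℤ, a m * ((w⁻¹)^(k+1) * pw a k (n - m))
        = (w⁻¹)^(k+1) * pw a (k+1) n := by
      intro k
      have : ∀ m : ℤ, a m * ((w⁻¹)^(k+1) * pw a k (n - m))
          = (w⁻¹)^(k+1) * (a m * pw a k (n - m)) := fun m => by ring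
      rw [tsum_congr this, tsum_mul_left]
      rfl
    calc convC a b n = ∑' m : ℤ, a m * b (n - m) := rfl
      _ = ∑' m : ℤ, ∑' k : ℕ, a m * ((w⁻¹)^(k+1) * pw a k (n - m)) := by
          apply tsum_congr; intro m
          show a m * b (n - m) = _
          rw [hb]
          exact tsum_mul_left.symm
      _ = ∑' k : ℕ, ∑' m : ℤ, a m * ((w⁻¹)^(k+1) * pw a k (n - m)) := hswap
      _ = ∑' k : ℕ, (w⁻¹)^(k+1) * pw a (k+1) n := tsum_congr hinner
      _ = w * b n - deltaC n := by
          have hf : Summable (fun k : ℕ => (w⁻¹)^(k+1) * pw a k n) := hsummandb n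
          have hshift : ∑' k : ℕ, (w⁻¹)^(k+1+1) * pw a (k+1) n
              = (∑' k : ℕ, (w⁻¹)^(k+1) * pw a k n) - (w⁻¹)^(0+1) * pw a 0 n := by
            have := Summable.tsum_eq_zero_add hf
            rw [this]; ring
          have : ∀ k : ℕ, (w⁻¹)^(k+1) * pw a (k+1) n = w * ((w⁻¹)^(k+1+1) * pw a (k+1) n) := by
            intro k
            have : w * (w⁻¹)^(k+1+1) = (w⁻¹)^(k+1) := by
              rw [pow_succ']
              rw [← mul_assoc, mul_inv_cancel₀ hw0, one_mul]
            rw [← mul_assoc, this]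
          rw [tsum_congr this, tsum_mul_left, hshift]
          rw [hb]
          show w * ((b n) - w⁻¹^(0+1) * pw a 0 n) = w * b n - deltaC n
          have : pw a 0 n = deltaC n := rfl
          rw [this, mul_sub]
          congr 1
          rw [← mul_assoc, pow_one, mul_inv_cancel₀ hw0, one_mul]
  refine ⟨b, hbdom.memOgammaC, ?_⟩
  funext n
  have hsub : ∀ m : ℤ, (w • deltaC - a) m * b (n - m)
      = w * (deltaC m * b (n - m)) - a m * b (n - m) := by
    intro m
    simp only [Pi.sub_apply, Pi.smul_apply, smul_eq_mul]
    ring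
  have hs1 : Summable (fun m : ℤ => w * (deltaC m * b (n - m))) := by
    apply summable_of_ne_finset_zero (s := ({0} : Finset ℤ))
    intro m hm
    simp at hm
    simp [deltaC, hm]
  have hs2 : Summable (fun m : ℤ => a m * b (n - m)) := by
    apply Summable.of_norm
    exact summable_conv_term hγ ha hbdom n
  calc convC (w • deltaC - a) b n = ∑' m : ℤ, (w • deltaC - a) m * b (n - m) := rfl
    _ = ∑' m : ℤ, (w * (deltaC m * b (n - m)) - a m * b (n - m)) := tsum_congr hsub
    _ = (∑' m : ℤ, w * (deltaC m * b (n - m))) - ∑' m : ℤ, a m * b (n - m) :=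
        Summable.tsum_sub hs1 hs2
    _ = w * b n - convC a b n := by
        congr 1
        rw [tsum_eq_single 0 (fun m hm => by simp [deltaC, hm])]
        simp [deltaC]
    _ = deltaC n := by rw [hab n]; ring

lemma dom_sub {C D : ℝ} {a b : ℤ → ℂ} (ha : Dom γ C a) (hb : Dom γ D b) :
    Dom γ (C + D) (a - b) := by
  intro n
  calc ‖(a - b) n‖ ≤ ‖a n‖ + ‖b n‖ := norm_sub_le _ _
    _ ≤ C * (wt γ n)⁻¹ + D * (wt γ n)⁻¹ := add_le_add (ha n) (hb n)
    _ = (C + D) * (wt γ n)⁻¹ := by ring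

lemma char_zero {χ : (ℤ → ℂ) → ℂ} (hχ : IsCharOgamma γ χ) : χ 0 = 0 := by
  have h := hχ.map_smul 0 deltaC (dom_delta (γ := γ)).memOgammaC
  simpa using h

lemma char_bound (hγ : 1 < γ) {χ : (ℤ → ℂ) → ℂ} (hχ : IsCharOgamma γ χ)
    {A : ℝ} {a : ℤ → ℂ} (ha : Dom γ A a) :
    ‖χ a‖ ≤ (2:ℝ)^γ * ∑' n, ‖a n‖ := by
  set A₁ := ∑' n, ‖a n‖ with hA₁def
  have Sa := ha.summable_norm hγ
  have h0 : 0 ≤ A₁ := tsum_nonneg (fun n => norm_nonneg _)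
  rcases eq_or_lt_of_le h0 with h | h
  · -- a = 0
    have hz : a = 0 := by
      funext n
      have h1 : ‖a n‖ ≤ A₁ := Summable.le_tsum Sa n (fun j _ => norm_nonneg _)
      rw [← h] at h1
      simpa using norm_le_zero_iff.1 h1
    rw [hz, char_zero hχ, ← h]
    simp
  · by_contra hcon
    push_neg at hcon
    obtain ⟨b, hbmem, hconv⟩ := exists_inverse hγ ha h (w := χ a) hcon
    set u : ℤ → ℂ := (χ a) • deltaC - a with hu
    have humem : MemOgammaC γ u :=
      (dom_sub (dom_smul (χ a) dom_delta) ha).memOgammaC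
    have hue : u = (χ a) • deltaC + (-1 : ℂ) • a := by
      funext m
      simp only [hu, Pi.sub_apply, Pi.add_apply, Pi.smul_apply, smul_eq_mul]
      ring
    have hchiu : χ u = 0 := by
      rw [hue, hχ.map_add _ _ (dom_smul (χ a) dom_delta).memOgammaC
        (dom_smul (-1 : ℂ) ha).memOgammaC,
        hχ.map_smul _ _ (dom_delta (γ := γ)).memOgammaC, hχ.map_smul _ _ ha.memOgammaC,
        hχ.map_one]
      ring
    have h1 : (1 : ℂ) = 0 := by
      calc (1 : ℂ) = χ deltaC := hχ.map_one.symm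
        _ = χ (convC u b) := by rw [hconv]
        _ = χ u * χ b := hχ.map_mul u b humem hbmem
        _ = 0 := by rw [hchiu]; ring
    exact one_ne_zero h1


variable {γ : ℝ}




/-- basis elements -/
def single (m : ℤ) : ℤ → ℂ := fun n => if n = m then 1 else 0

lemma single_zero : single 0 = deltaC := rfl


lemma dom_single (hγ : 0 ≤ γ) (m : ℤ) : Dom γ (wt γ m) (single m) := by
  intro n
  by_cases hn : n = m
  · subst hn
    simp [single, mul_inv_cancel₀ (ne_of_gt (wt_pos (γ := γ) n))]
  · simp only [single, hn, if_false, norm_zero]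
    exact mul_nonneg (le_of_lt (wt_pos m)) (inv_wt_nonneg n)

lemma tsum_norm_single (m : ℤ) : ∑' n : ℤ, ‖single m n‖ = 1 := by
  rw [tsum_eq_single m (fun n hn => by simp [single, hn])]
  simp [single]

lemma conv_single_left (m : ℤ) (c : ℤ → ℂ) : convC (single m) c = fun n => c (n - m) := by
  funext n
  rw [convC, tsum_eq_single m (fun k hk => by simp [single, hk])]
  simp [single]

lemma conv_single_single (i j : ℤ) : convC (single i) (single j) = single (i + j) := by
  rw [conv_single_left]
  funext n
  simp only [single]
  by_cases h : n = i + j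
  · rw [if_pos (by omega), if_pos h]
  · rw [if_neg (by omega), if_neg h]

lemma char_single_mul (hγ : 1 < γ) {χ : (ℤ → ℂ) → ℂ} (hχ : IsCharOgamma γ χ) (i j : ℤ) :
    χ (single (i + j)) = χ (single i) * χ (single j) := by
  rw [← conv_single_single i j]
  exact hχ.map_mul _ _ (dom_single (hγ0 hγ) i).memOgammaC (dom_single (hγ0 hγ) j).memOgammaC

lemma char_single_one_mul_inv (hγ : 1 < γ) {χ : (ℤ → ℂ) → ℂ} (hχ : IsCharOgamma γ χ) :
    χ (single 1) * χ (single (-1)) = 1 := by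
  rw [← char_single_mul hγ hχ 1 (-1)]
  norm_num [single_zero, hχ.map_one]

lemma char_single_ne_zero (hγ : 1 < γ) {χ : (ℤ → ℂ) → ℂ} (hχ : IsCharOgamma γ χ) :
    χ (single 1) ≠ 0 := by
  intro h
  have h2 := char_single_one_mul_inv hγ hχ
  rw [h, zero_mul] at h2
  exact zero_ne_one h2

lemma char_single_zpow (hγ : 1 < γ) {χ : (ℤ → ℂ) → ℂ} (hχ : IsCharOgamma γ χ) (m : ℤ) :
    χ (single m) = (χ (single 1)) ^ m := by
  have hne := char_single_ne_zero hγ hχ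
  have hinv : χ (single (-1)) = (χ (single 1))⁻¹ :=
    eq_inv_of_mul_eq_one_right (char_single_one_mul_inv hγ hχ)
  induction m using Int.induction_on with
  | zero => rw [single_zero, hχ.map_one, zpow_zero]
  | succ i ih =>
    have h : ((i : ℤ) + 1) = 1 + (i : ℤ) := by ring
    rw [h, char_single_mul hγ hχ 1 i, ih, ← h, zpow_add_one₀ hne]
    ring
  | pred i ih =>
    have h : (-(i : ℤ) - 1) = -1 + (-(i : ℤ)) := by ring
    rw [h, char_single_mul hγ hχ (-1) (-i), ih, hinv, ← h, zpow_sub_one₀ hne]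
    ring

lemma char_norm_single_le (hγ : 1 < γ) {χ : (ℤ → ℂ) → ℂ} (hχ : IsCharOgamma γ χ) (m : ℤ) :
    ‖χ (single m)‖ ≤ (2:ℝ)^γ := by
  have h := char_bound hγ hχ (dom_single (hγ0 hγ) m)
  rwa [tsum_norm_single, mul_one] at h

lemma char_norm_one (hγ : 1 < γ) {χ : (ℤ → ℂ) → ℂ} (hχ : IsCharOgamma γ χ) :
    ‖χ (single 1)‖ = 1 := by
  have hne := char_single_ne_zero hγ hχ
  have key : ∀ (x : ℂ), (∀ k : ℕ, ‖x‖ ^ k ≤ (2:ℝ)^γ) → ‖x‖ ≤ 1 := by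
    intro x hx
    by_contra hc
    push_neg at hc
    obtain ⟨k, hk⟩ := pow_unbounded_of_one_lt ((2:ℝ)^γ) hc
    exact absurd (hx k) (not_le.2 hk)
  have h1 : ‖χ (single 1)‖ ≤ 1 := by
    apply key
    intro k
    have h := char_norm_single_le hγ hχ (k : ℤ)
    rwa [char_single_zpow hγ hχ, norm_zpow, zpow_natCast] at h
  have h2 : ‖χ (single (-1))‖ ≤ 1 := by
    apply key
    intro k
    have e : χ (single (-1)) ^ k = χ (single (-(k:ℤ))) := by
      rw [char_single_zpow hγ hχ (-1), char_single_zpow hγ hχ (-(k:ℤ)),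
        ← zpow_natCast (χ (single 1) ^ (-1:ℤ)) k, ← zpow_mul]
      norm_num
    rw [← norm_pow, e]
    exact char_norm_single_le hγ hχ _
  have hprod : ‖χ (single 1)‖ * ‖χ (single (-1))‖ = 1 := by
    rw [← norm_mul, char_single_one_mul_inv hγ hχ, norm_one]
  have hge : 1 ≤ ‖χ (single 1)‖ := by nlinarith [norm_nonneg (χ (single 1)), norm_nonneg (χ (single (-1)))]
  exact le_antisymm h1 hge

def trunc (s : Finset ℤ) (a : ℤ → ℂ) : ℤ → ℂ := fun n => if n ∈ s then a n else 0

lemma dom_trunc {C : ℝ} {a : ℤ → ℂ} (ha : Dom γ C a) (s : Finset ℤ) : Dom γ C (trunc s a) := by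
  intro n
  by_cases h : n ∈ s
  · simpa [trunc, h] using ha n
  · simp only [trunc, h, if_false, norm_zero]
    exact mul_nonneg ha.nonneg (inv_wt_nonneg n)

lemma dom_resid {C : ℝ} {a : ℤ → ℂ} (ha : Dom γ C a) (s : Finset ℤ) :
    Dom γ C (a - trunc s a) := by
  intro n
  by_cases h : n ∈ s
  · simp only [Pi.sub_apply, trunc, h, if_true, sub_self, norm_zero]
    exact mul_nonneg ha.nonneg (inv_wt_nonneg n)
  · simpa [trunc, h] using ha n

lemma trunc_add_resid (s : Finset ℤ) (a : ℤ → ℂ) : trunc s a + (a - trunc s a) = a := by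
  funext n
  simp

lemma char_trunc (hγ : 1 < γ) {χ : (ℤ → ℂ) → ℂ} (hχ : IsCharOgamma γ χ)
    {C : ℝ} {a : ℤ → ℂ} (ha : Dom γ C a) (s : Finset ℤ) :
    χ (trunc s a) = ∑ n ∈ s, a n * (χ (single 1)) ^ n := by
  classical
  induction s using Finset.induction_on with
  | empty =>
    have h : trunc (∅ : Finset ℤ) a = 0 := by funext n; simp [trunc]
    rw [h, char_zero hχ, Finset.sum_empty]
  | @insert m s hm ih =>
    have hsplit : trunc (insert m s) a = (a m) • single m + trunc s a := by
      funext n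
      by_cases h : n = m
      · subst h
        simp [trunc, hm, single]
      · by_cases h2 : n ∈ s <;>
          simp [trunc, h, h2, single, Finset.mem_insert]
    rw [hsplit, hχ.map_add _ _ (dom_smul _ (dom_single (hγ0 hγ) m)).memOgammaC
      (dom_trunc ha s).memOgammaC,
      hχ.map_smul _ _ (dom_single (hγ0 hγ) m).memOgammaC, ih,
      char_single_zpow hγ hχ m, Finset.sum_insert hm]

lemma resid_tsum_norm {a : ℤ → ℂ} (s : Finset ℤ) :
    ∑' n : ℤ, ‖(a - trunc s a) n‖ = ∑' x : {x : ℤ // x ∉ s}, ‖a (x : ℤ)‖ := by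
  classical
  have h := tsum_subtype {x : ℤ | x ∉ s} (fun n => ‖a n‖)
  rw [show (∑' x : {x : ℤ // x ∉ s}, ‖a (x : ℤ)‖) = ∑' x : ↥{x : ℤ | x ∉ s}, ‖a (x : ℤ)‖ from rfl, h]
  apply tsum_congr
  intro n
  by_cases hn : n ∈ s
  · simp [Set.indicator_apply, trunc, hn]
  · simp [Set.indicator_apply, trunc, hn]

/-- the forward direction -/
lemma forward (hγ : 1 < γ) (χ : (ℤ → ℂ) → ℂ) (hχ : IsCharOgamma γ χ) :
    ∃ lam : ℂ, ‖lam‖ = 1 ∧ ∀ a, MemOgammaC γ a → χ a = ∑' n : ℤ, a n * lam ^ n := by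
  refine ⟨χ (single 1), char_norm_one hγ hχ, ?_⟩
  intro a hmem
  obtain ⟨C, ha⟩ := mem_iff_dom.1 hmem
  set lam := χ (single 1) with hlam
  have hdiff : ∀ s : Finset ℤ, (∑ n ∈ s, a n * lam ^ n) - χ a = -χ (a - trunc s a) := by
    intro s
    have h1 : χ a = χ (trunc s a) + χ (a - trunc s a) := by
      conv_lhs => rw [← trunc_add_resid s a]
      exact hχ.map_add _ _ (dom_trunc ha s).memOgammaC (dom_resid ha s).memOgammaC
    rw [char_trunc hγ hχ ha s] at h1
    rw [h1]
    ring
  have hnorm : ∀ s : Finset ℤ, ‖(∑ n ∈ s, a n * lam ^ n) - χ a‖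
      ≤ (2:ℝ)^γ * ∑' x : {x : ℤ // x ∉ s}, ‖a (x : ℤ)‖ := by
    intro s
    rw [hdiff s, norm_neg]
    calc ‖χ (a - trunc s a)‖ ≤ (2:ℝ)^γ * ∑' n : ℤ, ‖(a - trunc s a) n‖ :=
          char_bound hγ hχ (dom_resid ha s)
      _ = (2:ℝ)^γ * ∑' x : {x : ℤ // x ∉ s}, ‖a (x : ℤ)‖ := by rw [resid_tsum_norm]
  have htail : Filter.Tendsto
      (fun s : Finset ℤ => (2:ℝ)^γ * ∑' x : {x : ℤ // x ∉ s}, ‖a (x : ℤ)‖)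
      Filter.atTop (nhds 0) := by
    have := (tendsto_tsum_compl_atTop_zero (fun n : ℤ => ‖a n‖)).const_mul ((2:ℝ)^γ)
    simpa using this
  have hzero : Filter.Tendsto (fun s : Finset ℤ => (∑ n ∈ s, a n * lam ^ n) - χ a)
      Filter.atTop (nhds 0) :=
    squeeze_zero_norm hnorm htail
  have hHasSum : HasSum (fun n : ℤ => a n * lam ^ n) (χ a) :=
    tendsto_sub_nhds_zero_iff.1 hzero
  exact hHasSum.tsum_eq.symm

/-- the reverse direction -/
lemma backward (hγ : 1 < γ) (lam : ℂ) (hlam : ‖lam‖ = 1) :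
    ∃ χ : (ℤ → ℂ) → ℂ, IsCharOgamma γ χ ∧
      ∀ a, MemOgammaC γ a → χ a = ∑' n : ℤ, a n * lam ^ n := by
  have hlam0 : lam ≠ 0 := by
    intro h
    rw [h, norm_zero] at hlam
    exact zero_ne_one hlam
  have hnt : ∀ (a : ℤ → ℂ) (n : ℤ), ‖a n * lam ^ n‖ = ‖a n‖ := by
    intro a n
    rw [norm_mul, norm_zpow, hlam, one_zpow, mul_one]
  have hsumm : ∀ {a : ℤ → ℂ}, Summable (fun n => ‖a n‖) →
      Summable (fun n : ℤ => a n * lam ^ n) := by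
    intro a Sa
    apply Summable.of_norm
    apply Summable.congr Sa
    intro n
    exact (hnt a n).symm
  refine ⟨fun a => ∑' n : ℤ, a n * lam ^ n, ⟨?_, ?_, ?_, ?_⟩, fun a _ => rfl⟩
  · -- add
    intro a b ha hb
    obtain ⟨Ca, hda⟩ := mem_iff_dom.1 ha
    obtain ⟨Cb, hdb⟩ := mem_iff_dom.1 hb
    have h : ∀ n : ℤ, (a + b) n * lam ^ n = a n * lam ^ n + b n * lam ^ n := by
      intro n; simp [add_mul]
    rw [tsum_congr h]
    exact Summable.tsum_add (hsumm (hda.summable_norm hγ)) (hsumm (hdb.summable_norm hγ))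
  · -- smul
    intro s a _
    have h : ∀ n : ℤ, (s • a) n * lam ^ n = s * (a n * lam ^ n) := by
      intro n; simp [mul_assoc]
    rw [tsum_congr h, tsum_mul_left]
  · -- mul
    intro a b ha hb
    obtain ⟨Ca, hda⟩ := mem_iff_dom.1 ha
    obtain ⟨Cb, hdb⟩ := mem_iff_dom.1 hb
    have Sa := hda.summable_norm hγ
    have Sb := hdb.summable_norm hγ
    set f : ℤ → ℂ := fun n => a n * lam ^ n with hf
    set g : ℤ → ℂ := fun n => b n * lam ^ n with hg
    have Sf : Summable (fun n => ‖f n‖) := by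
      apply Summable.congr Sa; intro n; exact (hnt a n).symm
    have Sg : Summable (fun n => ‖g n‖) := by
      apply Summable.congr Sb; intro n; exact (hnt b n).symm
    have hprod : (∑' n, f n) * (∑' n, g n) = ∑' p : ℤ × ℤ, f p.1 * g p.2 :=
      tsum_mul_tsum_of_summable_norm (by simpa using Sf) (by simpa using Sg)
    set H : ℤ × ℤ → ℂ := fun p => f p.2 * g (p.1 - p.2) with hH
    have hHsumm : Summable H := by
      apply (shiftE.summable_iff (f := H)).1
      apply Summable.congr (summable_mul_of_summable_norm (by simpa using Sf) (by simpa using Sg))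
      intro p
      simp [H, shiftE]
    have hHtsum : ∑' p : ℤ × ℤ, H p = ∑' p : ℤ × ℤ, f p.1 * g p.2 := by
      rw [← shiftE.tsum_eq (f := H)]
      apply tsum_congr
      intro p
      simp [H, shiftE]
    have hfib : ∀ n : ℤ, Summable (fun k : ℤ => H (n, k)) := fun n => hHsumm.prod_factor n
    have hkey : ∀ (n k : ℤ), H (n, k) = (a k * b (n - k)) * lam ^ n := by
      intro n k
      have : lam ^ k * lam ^ (n - k) = lam ^ n := by
        rw [← zpow_add₀ hlam0]
        congr 1
        ring
      calc H (n, k) = a k * lam ^ k * (b (n - k) * lam ^ (n - k)) := rfl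
        _ = (a k * b (n - k)) * (lam ^ k * lam ^ (n - k)) := by ring
        _ = (a k * b (n - k)) * lam ^ n := by rw [this]
    calc ∑' n : ℤ, convC a b n * lam ^ n
        = ∑' n : ℤ, ∑' k : ℤ, H (n, k) := by
          apply tsum_congr
          intro n
          rw [tsum_congr (fun k => hkey n k), tsum_mul_right]
          rfl
      _ = ∑' p : ℤ × ℤ, H p := (Summable.tsum_prod' hHsumm hfib).symm
      _ = (∑' n, f n) * (∑' n, g n) := by rw [hHtsum, hprod]
  · -- one
    rw [tsum_eq_single 0 (fun n hn => by simp [deltaC, hn])]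
    simp [deltaC]

end OG
end

/-- The characters of `𝒪_γ(ℂ)` are exactly the evaluations at points of the
unit circle. -/
theorem stmt_7 (γ : ℝ) (hγ : 1 < γ) :
    (∀ χ : (ℤ → ℂ) → ℂ, IsCharOgamma γ χ →
      ∃ lam : ℂ, ‖lam‖ = 1 ∧ ∀ a, MemOgammaC γ a → χ a = ∑' n : ℤ, a n * lam ^ n)
    ∧ (∀ lam : ℂ, ‖lam‖ = 1 →
        ∃ χ : (ℤ → ℂ) → ℂ, IsCharOgamma γ χ ∧
          ∀ a, MemOgammaC γ a → χ a = ∑' n : ℤ, a n * lam ^ n) :=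
  ⟨fun χ hχ => OG.forward hγ χ hχ, fun lam hlam => OG.backward hγ lam hlam⟩
end

section
/- Schmidt's coboundary criterion: let T be an ergodic measure-preserving endomorphism of a probability space (X, m) and f : X → ℝ measurable. Then f can be written as g - g∘T for some measurable g if and only if for every ε > 0 there exists C > 0 such that for all n ≥ 1, m{x ∈ X : |S_n f(x)| ≥ C} ≤ ε, where S_n f = Σ_{k=0}^{n-1} f∘T^k. -/
open MeasureTheory Finset Filter Set Topology ENNReal
set_option maxHeartbeats 1000000
set_option synthInstance.maxHeartbeats 400000

noncomputable section

/-- The fixed ultrafilter on ℕ extending `atTop`. -/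
def UF : Ultrafilter ℕ := Ultrafilter.of atTop

lemma UF_le_atTop : (UF : Filter ℕ) ≤ atTop := Ultrafilter.of_le _

lemma exists_tendsto_UF (s : ℕ → ℝ) (c : ℝ) (hs : ∀ n, s n ∈ Set.Icc (-c) c) :
    ∃ L ∈ Set.Icc (-c) c, Tendsto s (UF : Filter ℕ) (𝓝 L) := by
  have h1 : (UF.map s : Filter ℝ) ≤ 𝓟 (Set.Icc (-c) c) := by
    rw [le_principal_iff]
    have : s ⁻¹' Set.Icc (-c) c = Set.univ := by
      ext n; simpa using hs n
    rw [Ultrafilter.mem_coe, Ultrafilter.mem_map, this]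
    exact Filter.univ_mem
  obtain ⟨L, hL, h2⟩ := isCompact_Icc.ultrafilter_le_nhds (UF.map s) h1
  exact ⟨L, hL, h2⟩

lemma tendsto_limUnder_UF (s : ℕ → ℝ) (c : ℝ) (hs : ∀ n, s n ∈ Set.Icc (-c) c) :
    Tendsto s (UF : Filter ℕ) (𝓝 (limUnder (UF : Filter ℕ) s)) := by
  obtain ⟨L, _, h⟩ := exists_tendsto_UF s c hs
  rwa [h.limUnder_eq]

open Classical in
/-- 0/1 indicator of a proposition. -/
def ind01 (P : Prop) : ℝ := if P then 1 else 0

lemma ind01_nonneg (P : Prop) : 0 ≤ ind01 P := by unfold ind01; split <;> norm_num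

lemma ind01_le_one (P : Prop) : ind01 P ≤ 1 := by unfold ind01; split <;> norm_num

lemma ind01_mono {P Q : Prop} (h : P → Q) : ind01 P ≤ ind01 Q := by
  unfold ind01; split
  · rw [if_pos (h (by assumption))]
  · exact ind01_nonneg Q

lemma abs_ind01_le (P : Prop) : |ind01 P| ≤ 1 := by
  rw [abs_of_nonneg (ind01_nonneg P)]; exact ind01_le_one P

variable {X : Type*} [MeasurableSpace X]

/-- Birkhoff sums. -/
def birk (T : X → X) (f : X → ℝ) (n : ℕ) (x : X) : ℝ := ∑ k ∈ range n, f (T^[k] x)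

lemma birk_measurable {T : X → X} {f : X → ℝ} (hT : Measurable T) (hf : Measurable f)
    (n : ℕ) : Measurable (birk T f n) :=
  Finset.measurable_sum _ fun k _ => hf.comp (hT.iterate k)

lemma birk_comp_T (T : X → X) (f : X → ℝ) (n : ℕ) (x : X) :
    birk T f n (T x) = birk T f (n + 1) x - f x := by
  unfold birk
  rw [Finset.sum_range_succ']
  simp [Function.iterate_succ_apply]

/-- Cesàro averages of the indicators of the events `birk n ≤ q`. -/
def AA (T : X → X) (f : X → ℝ) (N : ℕ) (q : ℝ) (x : X) : ℝ :=
  (N : ℝ)⁻¹ * ∑ n ∈ range N, ind01 (birk T f n x ≤ q)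

/-- Shifted averages. -/
def BB (T : X → X) (f : X → ℝ) (N : ℕ) (q : ℝ) (x : X) : ℝ :=
  (N : ℝ)⁻¹ * ∑ n ∈ range N, ind01 (birk T f n x ≤ q + f x)

lemma AA_measurable {T : X → X} {f : X → ℝ} (hT : Measurable T) (hf : Measurable f)
    (N : ℕ) (q : ℝ) : Measurable (AA T f N q) := by
  refine Measurable.const_mul (Finset.measurable_sum _ fun n _ => ?_) _
  have hs : MeasurableSet {x | birk T f n x ≤ q} :=
    measurableSet_le (birk_measurable hT hf n) measurable_const
  have h2 : (fun x => ind01 (birk T f n x ≤ q))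
      = Set.indicator {x | birk T f n x ≤ q} (fun _ => (1:ℝ)) := by
    ext x; by_cases h : birk T f n x ≤ q <;> simp [ind01, h]
  rw [h2]
  exact measurable_const.indicator hs

lemma AA_nonneg (T : X → X) (f : X → ℝ) (N : ℕ) (q : ℝ) (x : X) : 0 ≤ AA T f N q x := by
  unfold AA
  have : (0:ℝ) ≤ ∑ n ∈ range N, ind01 (birk T f n x ≤ q) :=
    Finset.sum_nonneg fun n _ => ind01_nonneg _
  exact mul_nonneg (by positivity) this

lemma AA_le_one (T : X → X) (f : X → ℝ) (N : ℕ) (q : ℝ) (x : X) : AA T f N q x ≤ 1 := by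
  unfold AA
  rcases Nat.eq_zero_or_pos N with h | h
  · simp [h]
  · have hsum : ∑ n ∈ range N, ind01 (birk T f n x ≤ q) ≤ (N:ℝ) := by
      calc ∑ n ∈ range N, ind01 (birk T f n x ≤ q) ≤ ∑ n ∈ range N, 1 :=
            Finset.sum_le_sum fun n _ => ind01_le_one _
        _ = (N:ℝ) := by simp
    rw [inv_mul_le_iff₀ (by exact_mod_cast h), mul_one]
    exact hsum

lemma AA_mono (T : X → X) (f : X → ℝ) (N : ℕ) {q q' : ℝ} (h : q ≤ q') (x : X) :
    AA T f N q x ≤ AA T f N q' x := by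
  unfold AA
  exact mul_le_mul_of_nonneg_left
    (Finset.sum_le_sum fun n _ => ind01_mono fun hle => le_trans hle h) (by positivity)

lemma AA_le_BB (T : X → X) (f : X → ℝ) (N : ℕ) (q : ℝ) {a : ℝ} {x : X} (h : a ≤ f x) :
    AA T f N (q + a) x ≤ BB T f N q x := by
  unfold AA BB
  exact mul_le_mul_of_nonneg_left
    (Finset.sum_le_sum fun n _ => ind01_mono fun hle => hle.trans (by linarith)) (by positivity)

lemma BB_le_AA (T : X → X) (f : X → ℝ) (N : ℕ) (q : ℝ) {b : ℝ} {x : X} (h : f x < b) :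
    BB T f N q x ≤ AA T f N (q + b) x := by
  unfold AA BB
  exact mul_le_mul_of_nonneg_left
    (Finset.sum_le_sum fun n _ => ind01_mono fun hle => hle.trans (by linarith)) (by positivity)

lemma abs_AA_comp_sub_BB (T : X → X) (f : X → ℝ) (N : ℕ) (q : ℝ) (x : X) :
    |AA T f N q (T x) - BB T f N q x| ≤ 2 / N := by
  set u : ℕ → ℝ := fun n => ind01 (birk T f n x ≤ q + f x) with hu
  have hAT : AA T f N q (T x) = (N : ℝ)⁻¹ * ∑ n ∈ range N, u (n + 1) := by
    unfold AA
    congr 1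
    refine Finset.sum_congr rfl fun n _ => ?_
    have : (birk T f n (T x) ≤ q) = (birk T f (n + 1) x ≤ q + f x) := by
      rw [birk_comp_T]
      exact propext sub_le_iff_le_add
    rw [show ind01 (birk T f n (T x) ≤ q) = ind01 (birk T f (n+1) x ≤ q + f x) from
      congrArg ind01 this]
  have hsum : ∑ n ∈ range N, u (n + 1) = (∑ n ∈ range N, u n) + u N - u 0 := by
    have h1 := Finset.sum_range_succ' u N
    have h2 := Finset.sum_range_succ u N
    linarith
  have hBB : BB T f N q x = (N : ℝ)⁻¹ * ∑ n ∈ range N, u n := rfl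
  rw [hAT, hBB, hsum]
  have hdiff : |u N - u 0| ≤ 2 := by
    have h1 := ind01_nonneg (birk T f N x ≤ q + f x)
    have h2 := ind01_le_one (birk T f N x ≤ q + f x)
    have h3 := ind01_nonneg (birk T f 0 x ≤ q + f x)
    have h4 := ind01_le_one (birk T f 0 x ≤ q + f x)
    rw [abs_le]; constructor <;> simp only [hu] <;> nlinarith
  have : (N:ℝ)⁻¹ * ((∑ n ∈ range N, u n) + u N - u 0) - (N:ℝ)⁻¹ * ∑ n ∈ range N, u n
      = (N:ℝ)⁻¹ * (u N - u 0) := by ring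
  rw [this, abs_mul, abs_of_nonneg (by positivity : (0:ℝ) ≤ (N:ℝ)⁻¹)]
  rcases Nat.eq_zero_or_pos N with h | h
  · simp [h]
  · have hN : (0:ℝ) < N := by exact_mod_cast h
    rw [div_eq_mul_inv, mul_comm (2:ℝ)]
    exact mul_le_mul_of_nonneg_left hdiff (by positivity)

lemma BB_nonneg (T : X → X) (f : X → ℝ) (N : ℕ) (q : ℝ) (x : X) : 0 ≤ BB T f N q x :=
  mul_nonneg (by positivity) (Finset.sum_nonneg fun n _ => ind01_nonneg _)

section L2M

open scoped RealInnerProductSpace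

variable (m : Measure X) [IsProbabilityMeasure m]
variable {T : X → X} {f : X → ℝ} (hT : Measurable T) (hf : Measurable f)


def KK (hTm : MeasurePreserving T m m) : Lp ℝ 2 m →L[ℝ] Lp ℝ 2 m :=
  AddMonoidHom.toRealLinearMap (Lp.compMeasurePreserving T hTm)
    (Lp.isometry_compMeasurePreserving hTm).continuous

lemma coeFn_KK (hTm : MeasurePreserving T m m) (v : Lp ℝ 2 m) :
    KK m hTm v =ᵐ[m] (v : X → ℝ) ∘ T := by
  have h0 : KK m hTm v = Lp.compMeasurePreserving T hTm v :=
    congrFun (AddMonoidHom.coe_toRealLinearMap _ _) v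
  rw [h0]
  exact Lp.coeFn_compMeasurePreserving v hTm

lemma Lp2_integrable (v : Lp ℝ 2 m) : Integrable (v : X → ℝ) m :=
  memLp_one_iff_integrable.mp ((Lp.memLp v).mono_exponent (by norm_num))

lemma integrable_of_bnd {φ : X → ℝ} (hm : Measurable φ) (c : ℝ) (hb : ∀ x, |φ x| ≤ c) :
    Integrable φ m :=
  memLp_one_iff_integrable.mp (MemLp.of_bound hm.aestronglyMeasurable c
    (Filter.Eventually.of_forall fun x => by rw [Real.norm_eq_abs]; exact hb x))

lemma tendsto_two_div_UF : Tendsto (fun N : ℕ => 2 / (N:ℝ)) (UF : Filter ℕ) (𝓝 0) :=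
  (tendsto_const_div_atTop_nhds_zero_nat 2).mono_left UF_le_atTop

lemma inner_eq_integral (u v : Lp ℝ 2 m) : ⟪u, v⟫ = ∫ x, u x * v x ∂m := by
  rw [L2.inner_def]
  simp only [RCLike.inner_apply, starRingEnd_apply, star_trivial]
  simp only [mul_comm]

def indLp {E : Set X} (hE : MeasurableSet E) : Lp ℝ 2 m :=
  indicatorConstLp 2 hE (measure_ne_top m E) 1

lemma inner_indLp_left {E : Set X} (v : Lp ℝ 2 m) (hE : MeasurableSet E) :
    ⟪v, indLp m hE⟫ = ∫ x in E, v x ∂m := by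
  rw [inner_eq_integral]
  calc ∫ x, v x * (indLp m hE) x ∂m
      = ∫ x, E.indicator (fun y => v y) x ∂m := by
        apply integral_congr_ae
        filter_upwards [indicatorConstLp_coeFn (p := 2) (hs := hE)
          (hμs := measure_ne_top m E) (c := (1:ℝ))] with x hx
        rw [show (indLp m hE) x = E.indicator (fun _ => (1:ℝ)) x from hx]
        by_cases hxE : x ∈ E <;> simp [hxE]
    _ = ∫ x in E, v x ∂m := integral_indicator hE

include hT hf

lemma memℒp_AA (N : ℕ) (q : ℝ) : MemLp (AA T f N q) 2 m :=
  MemLp.of_bound (AA_measurable hT hf N q).aestronglyMeasurable 1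
    (Filter.Eventually.of_forall fun x => by
      rw [Real.norm_eq_abs, abs_of_nonneg (AA_nonneg T f N q x)]
      exact AA_le_one T f N q x)

def ALp (N : ℕ) (q : ℝ) : Lp ℝ 2 m := (memℒp_AA m hT hf N q).toLp _

lemma coeFn_ALp (N : ℕ) (q : ℝ) : ALp m hT hf N q =ᵐ[m] AA T f N q :=
  (memℒp_AA m hT hf N q).coeFn_toLp

lemma norm_ALp_le_one (N : ℕ) (q : ℝ) : ‖ALp m hT hf N q‖ ≤ 1 := by
  rw [ALp, Lp.norm_toLp]
  have h := eLpNorm_le_of_ae_bound (C := 1) (f := AA T f N q) (μ := m) (p := 2)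
    (Filter.Eventually.of_forall fun x => by
      rw [Real.norm_eq_abs, abs_of_nonneg (AA_nonneg T f N q x)]; exact AA_le_one T f N q x)
  have h2 : eLpNorm (AA T f N q) 2 m ≤ 1 := by simpa using h
  calc (eLpNorm (AA T f N q) 2 m).toReal ≤ (1 : ℝ≥0∞).toReal :=
        ENNReal.toReal_mono (by norm_num) h2
    _ = 1 := by simp

lemma abs_inner_ALp_le (u : Lp ℝ 2 m) (N : ℕ) (q : ℝ) : |⟪u, ALp m hT hf N q⟫| ≤ ‖u‖ :=
  calc |⟪u, ALp m hT hf N q⟫| ≤ ‖u‖ * ‖ALp m hT hf N q‖ := abs_real_inner_le_norm _ _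
    _ ≤ ‖u‖ * 1 := by
        have := norm_ALp_le_one m hT hf N q
        gcongr
    _ = ‖u‖ := mul_one _

lemma tendsto_inner_ALp (u : Lp ℝ 2 m) (q : ℝ) :
    Tendsto (fun N => ⟪u, ALp m hT hf N q⟫) (UF : Filter ℕ)
      (𝓝 (limUnder (UF : Filter ℕ) fun N => ⟪u, ALp m hT hf N q⟫)) :=
  tendsto_limUnder_UF _ ‖u‖ fun N => Set.mem_Icc.2 (abs_le.mp (abs_inner_ALp_le m hT hf u N q))

def Lam (q : ℝ) : Lp ℝ 2 m →L[ℝ] ℝ :=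
  LinearMap.mkContinuous
    { toFun := fun u => limUnder (UF : Filter ℕ) fun N => ⟪u, ALp m hT hf N q⟫
      map_add' := fun u v => by
        have h1 := tendsto_inner_ALp m hT hf u q
        have h2 := tendsto_inner_ALp m hT hf v q
        have h3 : Tendsto (fun N => ⟪u + v, ALp m hT hf N q⟫) (UF : Filter ℕ)
            (𝓝 ((limUnder (UF : Filter ℕ) fun N => ⟪u, ALp m hT hf N q⟫) +
                 limUnder (UF : Filter ℕ) fun N => ⟪v, ALp m hT hf N q⟫)) := by
          simpa [inner_add_left] using h1.add h2
        exact h3.limUnder_eq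
      map_smul' := fun c u => by
        have h1 := tendsto_inner_ALp m hT hf u q
        have h3 : Tendsto (fun N => ⟪c • u, ALp m hT hf N q⟫) (UF : Filter ℕ)
            (𝓝 (c * limUnder (UF : Filter ℕ) fun N => ⟪u, ALp m hT hf N q⟫)) := by
          simpa [real_inner_smul_left] using h1.const_mul c
        simpa using h3.limUnder_eq }
    1
    (fun u => by
      simp only [LinearMap.coe_mk, AddHom.coe_mk, Real.norm_eq_abs, one_mul]
      have h1 := (tendsto_inner_ALp m hT hf u q).abs
      exact le_of_tendsto h1
        (Filter.Eventually.of_forall fun N => abs_inner_ALp_le m hT hf u N q))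

lemma Lam_apply (q : ℝ) (u : Lp ℝ 2 m) :
    Lam m hT hf q u = limUnder (UF : Filter ℕ) fun N => ⟪u, ALp m hT hf N q⟫ := rfl

lemma tendsto_Lam (u : Lp ℝ 2 m) (q : ℝ) :
    Tendsto (fun N => ⟪u, ALp m hT hf N q⟫) (UF : Filter ℕ) (𝓝 (Lam m hT hf q u)) := by
  rw [Lam_apply]; exact tendsto_inner_ALp m hT hf u q

def FF (q : ℝ) : Lp ℝ 2 m := (InnerProductSpace.toDual ℝ (Lp ℝ 2 m)).symm (Lam m hT hf q)

lemma inner_FF (q : ℝ) (u : Lp ℝ 2 m) : ⟪FF m hT hf q, u⟫ = Lam m hT hf q u :=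
  InnerProductSpace.toDual_symm_apply



lemma inner_indLp_ALp {E : Set X} (hE : MeasurableSet E) (N : ℕ) (q : ℝ) :
    ⟪indLp m hE, ALp m hT hf N q⟫ = ∫ x in E, AA T f N q x ∂m := by
  rw [real_inner_comm, inner_indLp_left]
  exact setIntegral_congr_ae hE ((coeFn_ALp m hT hf N q).mono fun x hx _ => hx)

lemma inner_adj_ALp (hTm : MeasurePreserving T m m) {E : Set X} (hE : MeasurableSet E)
    (N : ℕ) (q : ℝ) :
    ⟪(ContinuousLinearMap.adjoint (KK m hTm)) (indLp m hE), ALp m hT hf N q⟫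
      = ∫ x in E, AA T f N q (T x) ∂m := by
  rw [ContinuousLinearMap.adjoint_inner_left, real_inner_comm, inner_indLp_left]
  have h1 : (ALp m hT hf N q : X → ℝ) ∘ T =ᵐ[m] AA T f N q ∘ T :=
    (coeFn_ALp m hT hf N q).comp_tendsto hTm.quasiMeasurePreserving.tendsto_ae
  have h2 : KK m hTm (ALp m hT hf N q) =ᵐ[m] AA T f N q ∘ T :=
    (coeFn_KK m hTm _).trans h1
  exact setIntegral_congr_ae hE (h2.mono fun x hx _ => hx)

lemma inner_KK_FF_indLp (hTm : MeasurePreserving T m m) {E : Set X} (hE : MeasurableSet E)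
    (q : ℝ) :
    ⟪KK m hTm (FF m hT hf q), indLp m hE⟫
      = Lam m hT hf q ((ContinuousLinearMap.adjoint (KK m hTm)) (indLp m hE)) := by
  rw [← ContinuousLinearMap.adjoint_inner_right, inner_FF]

lemma BB_measurable (N : ℕ) (q : ℝ) : Measurable (BB T f N q) := by
  refine Measurable.const_mul (Finset.measurable_sum _ fun n _ => ?_) _
  have hs : MeasurableSet {x | birk T f n x ≤ q + f x} :=
    measurableSet_le (birk_measurable hT hf n) (measurable_const.add hf)
  have h2 : (fun x => ind01 (birk T f n x ≤ q + f x))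
      = Set.indicator {x | birk T f n x ≤ q + f x} (fun _ => (1:ℝ)) := by
    ext x; by_cases h : birk T f n x ≤ q + f x <;> simp [ind01, h]
  rw [h2]
  exact measurable_const.indicator hs



lemma integrable_AA (N : ℕ) (q : ℝ) : Integrable (AA T f N q) m :=
  integrable_of_bnd m (AA_measurable hT hf N q) 1 fun x => by
    rw [abs_of_nonneg (AA_nonneg T f N q x)]; exact AA_le_one T f N q x

lemma integrable_AA_comp (N : ℕ) (q : ℝ) : Integrable (fun x => AA T f N q (T x)) m :=
  integrable_of_bnd m ((AA_measurable hT hf N q).comp hT) 1 fun x => by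
    rw [abs_of_nonneg (AA_nonneg T f N q (T x))]; exact AA_le_one T f N q (T x)

lemma integrable_BB (N : ℕ) (q : ℝ) : Integrable (BB T f N q) m := by
  refine integrable_of_bnd m (BB_measurable hT hf N q) (1 + 2/N) fun x => ?_
  have h1 := abs_AA_comp_sub_BB T f N q x
  have h2 := AA_nonneg T f N q (T x)
  have h3 := AA_le_one T f N q (T x)
  have h4 := BB_nonneg T f N q x
  rw [abs_of_nonneg h4]
  have := (abs_le.mp h1).1
  linarith

lemma tendsto_setIntegral_AA (q : ℝ) {E : Set X} (hE : MeasurableSet E) :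
    Tendsto (fun N => ∫ x in E, AA T f N q x ∂m) (UF : Filter ℕ)
      (𝓝 (∫ x in E, (FF m hT hf q : X → ℝ) x ∂m)) := by
  have heq : ∫ x in E, (FF m hT hf q : X → ℝ) x ∂m = Lam m hT hf q (indLp m hE) := by
    rw [← inner_indLp_left m (FF m hT hf q) hE, inner_FF]
  rw [heq]
  exact (tendsto_Lam m hT hf (indLp m hE) q).congr fun N => inner_indLp_ALp m hT hf hE N q

lemma tendsto_setIntegral_AA_comp (hTm : MeasurePreserving T m m) (q : ℝ) {E : Set X}
    (hE : MeasurableSet E) :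
    Tendsto (fun N => ∫ x in E, AA T f N q (T x) ∂m) (UF : Filter ℕ)
      (𝓝 (∫ x in E, (KK m hTm (FF m hT hf q) : X → ℝ) x ∂m)) := by
  have heq : ∫ x in E, (KK m hTm (FF m hT hf q) : X → ℝ) x ∂m
      = Lam m hT hf q ((ContinuousLinearMap.adjoint (KK m hTm)) (indLp m hE)) := by
    rw [← inner_indLp_left m (KK m hTm (FF m hT hf q)) hE, inner_KK_FF_indLp]
  rw [heq]
  exact (tendsto_Lam m hT hf _ q).congr fun N => inner_adj_ALp m hT hf hTm hE N q

lemma FF_setIntegral_mem (q : ℝ) {E : Set X} (hE : MeasurableSet E) :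
    ∫ x in E, (FF m hT hf q : X → ℝ) x ∂m ∈ Set.Icc 0 (m E).toReal := by
  refine isClosed_Icc.mem_of_tendsto (tendsto_setIntegral_AA m hT hf q hE)
    (Filter.Eventually.of_forall fun N => ?_)
  constructor
  · exact setIntegral_nonneg hE fun x _ => AA_nonneg T f N q x
  · calc ∫ x in E, AA T f N q x ∂m ≤ ∫ _ in E, (1:ℝ) ∂m :=
          setIntegral_mono_on (integrable_AA m hT hf N q).integrableOn
            (integrableOn_const (measure_ne_top m E)) hE
            fun x _ => AA_le_one T f N q x
      _ = (m E).toReal := by simp [measureReal_def]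

lemma FF_setIntegral_mono {q q' : ℝ} (h : q ≤ q') {E : Set X} (hE : MeasurableSet E) :
    ∫ x in E, (FF m hT hf q : X → ℝ) x ∂m ≤ ∫ x in E, (FF m hT hf q' : X → ℝ) x ∂m := by
  refine le_of_tendsto_of_tendsto' (tendsto_setIntegral_AA m hT hf q hE)
    (tendsto_setIntegral_AA m hT hf q' hE) fun N => ?_
  exact setIntegral_mono_on (integrable_AA m hT hf N q).integrableOn
    (integrable_AA m hT hf N q').integrableOn hE fun x _ => AA_mono T f N h x


lemma FF_setIntegral_sandwich_lower (hTm : MeasurePreserving T m m) (q a : ℝ) {E : Set X}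
    (hE : MeasurableSet E) (hEf : ∀ x ∈ E, a ≤ f x) :
    ∫ x in E, (FF m hT hf (q + a) : X → ℝ) x ∂m
      ≤ ∫ x in E, (KK m hTm (FF m hT hf q) : X → ℝ) x ∂m := by
  have h1 := tendsto_setIntegral_AA m hT hf (q + a) hE
  have h2 : Tendsto (fun N => (∫ x in E, AA T f N q (T x) ∂m) + 2 / (N:ℝ)) (UF : Filter ℕ)
      (𝓝 ((∫ x in E, (KK m hTm (FF m hT hf q) : X → ℝ) x ∂m) + 0)) :=
    (tendsto_setIntegral_AA_comp m hT hf hTm q hE).add (tendsto_two_div_UF)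
  rw [add_zero] at h2
  refine le_of_tendsto_of_tendsto' h1 h2 fun N => ?_
  calc ∫ x in E, AA T f N (q + a) x ∂m
      ≤ ∫ x in E, BB T f N q x ∂m :=
        setIntegral_mono_on (integrable_AA m hT hf N (q+a)).integrableOn
          (integrable_BB m hT hf N q).integrableOn hE
          fun x hx => AA_le_BB T f N q (hEf x hx)
    _ ≤ ∫ x in E, (AA T f N q (T x) + 2 / (N:ℝ)) ∂m :=
        setIntegral_mono_on (integrable_BB m hT hf N q).integrableOn
          ((integrable_AA_comp m hT hf N q).add (integrable_const _)).integrableOn hE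
          fun x _ => by
            have := (abs_le.mp (abs_AA_comp_sub_BB T f N q x)).1
            linarith
    _ = (∫ x in E, AA T f N q (T x) ∂m) + (m E).toReal * (2 / (N:ℝ)) := by
        rw [integral_add (integrable_AA_comp m hT hf N q).integrableOn
          (integrableOn_const (measure_ne_top m E))]
        simp [smul_eq_mul, measureReal_def]
    _ ≤ (∫ x in E, AA T f N q (T x) ∂m) + 2 / (N:ℝ) := by
        have h3 : (m E).toReal ≤ 1 := by
          have := prob_le_one (μ := m) (s := E)
          simpa using ENNReal.toReal_mono (by norm_num) this
        have h4 : (0:ℝ) ≤ 2 / (N:ℝ) := by positivity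
        nlinarith

lemma FF_setIntegral_sandwich_upper (hTm : MeasurePreserving T m m) (q b : ℝ) {E : Set X}
    (hE : MeasurableSet E) (hEf : ∀ x ∈ E, f x < b) :
    ∫ x in E, (KK m hTm (FF m hT hf q) : X → ℝ) x ∂m
      ≤ ∫ x in E, (FF m hT hf (q + b) : X → ℝ) x ∂m := by
  have h1 : Tendsto (fun N => (∫ x in E, AA T f N (q+b) x ∂m) + 2 / (N:ℝ)) (UF : Filter ℕ)
      (𝓝 ((∫ x in E, (FF m hT hf (q+b) : X → ℝ) x ∂m) + 0)) :=
    (tendsto_setIntegral_AA m hT hf (q + b) hE).add (tendsto_two_div_UF)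
  rw [add_zero] at h1
  refine le_of_tendsto_of_tendsto' (tendsto_setIntegral_AA_comp m hT hf hTm q hE) h1 fun N => ?_
  calc ∫ x in E, AA T f N q (T x) ∂m
      ≤ ∫ x in E, (BB T f N q x + 2 / (N:ℝ)) ∂m :=
        setIntegral_mono_on (integrable_AA_comp m hT hf N q).integrableOn
          ((integrable_BB m hT hf N q).add (integrable_const _)).integrableOn hE
          fun x _ => by
            have := (abs_le.mp (abs_AA_comp_sub_BB T f N q x)).2
            linarith
    _ ≤ ∫ x in E, (AA T f N (q+b) x + 2 / (N:ℝ)) ∂m :=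
        setIntegral_mono_on ((integrable_BB m hT hf N q).add (integrable_const _)).integrableOn
          ((integrable_AA m hT hf N (q+b)).add (integrable_const _)).integrableOn hE
          fun x hx => by
            have := BB_le_AA T f N q (hEf x hx)
            linarith
    _ = (∫ x in E, AA T f N (q+b) x ∂m) + (m E).toReal * (2 / (N:ℝ)) := by
        rw [integral_add (integrable_AA m hT hf N (q+b)).integrableOn
          (integrableOn_const (measure_ne_top m E))]
        simp [smul_eq_mul, measureReal_def]
    _ ≤ (∫ x in E, AA T f N (q+b) x ∂m) + 2 / (N:ℝ) := by
        have h3 : (m E).toReal ≤ 1 := by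
          have := prob_le_one (μ := m) (s := E)
          simpa using ENNReal.toReal_mono (by norm_num) this
        have h4 : (0:ℝ) ≤ 2 / (N:ℝ) := by positivity
        nlinarith

lemma FF_ae_nonneg (q : ℝ) : 0 ≤ᵐ[m] (FF m hT hf q : X → ℝ) :=
  ae_nonneg_of_forall_setIntegral_nonneg (Lp2_integrable m _)
    fun s hs _ => (FF_setIntegral_mem m hT hf q hs).1

lemma FF_ae_le_one (q : ℝ) : ∀ᵐ x ∂m, (FF m hT hf q : X → ℝ) x ≤ 1 := by
  have h : 0 ≤ᵐ[m] fun x => 1 - (FF m hT hf q : X → ℝ) x := by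
    refine ae_nonneg_of_forall_setIntegral_nonneg
      ((integrable_const 1).sub (Lp2_integrable m _)) fun s hs _ => ?_
    rw [integral_sub (integrableOn_const (C := (1:ℝ)) (measure_ne_top m s))
      (Lp2_integrable m _).integrableOn]
    have h2 := (FF_setIntegral_mem m hT hf q hs).2
    have h3 : ∫ _ in s, (1:ℝ) ∂m = (m s).toReal := by simp [measureReal_def]
    linarith
  filter_upwards [h] with x hx
  simpa using hx

lemma FF_ae_mono {q q' : ℝ} (h : q ≤ q') :
    ∀ᵐ x ∂m, (FF m hT hf q : X → ℝ) x ≤ (FF m hT hf q' : X → ℝ) x := by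
  have hae : 0 ≤ᵐ[m] fun x => (FF m hT hf q' : X → ℝ) x - (FF m hT hf q : X → ℝ) x := by
    refine ae_nonneg_of_forall_setIntegral_nonneg
      ((Lp2_integrable m _).sub (Lp2_integrable m _)) fun s hs _ => ?_
    rw [integral_sub (Lp2_integrable m _).integrableOn (Lp2_integrable m _).integrableOn]
    have := FF_setIntegral_mono m hT hf h hs
    linarith
  filter_upwards [hae] with x hx
  have : (0:ℝ) ≤ (FF m hT hf q' : X → ℝ) x - (FF m hT hf q : X → ℝ) x := hx
  linarith

lemma FF_ae_sandwich_lower (hTm : MeasurePreserving T m m) (q a : ℝ) :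
    ∀ᵐ x ∂m, a ≤ f x →
      (FF m hT hf (q + a) : X → ℝ) x ≤ (FF m hT hf q : X → ℝ) (T x) := by
  set ψ : X → ℝ := fun x =>
    (KK m hTm (FF m hT hf q) : X → ℝ) x - (FF m hT hf (q + a) : X → ℝ) x with hψ
  have hψint : Integrable ψ m := (Lp2_integrable m _).sub (Lp2_integrable m _)
  have hfa : MeasurableSet {x | a ≤ f x} := measurableSet_le measurable_const hf
  have h : 0 ≤ᵐ[m] ({x | a ≤ f x}.indicator ψ) := by
    refine ae_nonneg_of_forall_setIntegral_nonneg (hψint.indicator hfa) fun s hs _ => ?_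
    rw [setIntegral_indicator hfa]
    have hsub : ∀ x ∈ s ∩ {x | a ≤ f x}, a ≤ f x := fun x hx => hx.2
    have h2 := FF_setIntegral_sandwich_lower m hT hf hTm q a (hs.inter hfa) hsub
    rw [hψ, integral_sub (Lp2_integrable m _).integrableOn (Lp2_integrable m _).integrableOn]
    linarith
  have hK := coeFn_KK m hTm (FF m hT hf q)
  filter_upwards [h, hK] with x hx hKx hax
  have h1 : 0 ≤ ψ x := by
    have hmem : x ∈ {y | a ≤ f y} := hax
    simpa [Set.indicator_of_mem hmem] using hx
  have h2 : (KK m hTm (FF m hT hf q) : X → ℝ) x = (FF m hT hf q : X → ℝ) (T x) := hKx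
  rw [hψ] at h1
  simp only at h1
  linarith [h1]

lemma FF_ae_sandwich_upper (hTm : MeasurePreserving T m m) (q b : ℝ) :
    ∀ᵐ x ∂m, f x < b →
      (FF m hT hf q : X → ℝ) (T x) ≤ (FF m hT hf (q + b) : X → ℝ) x := by
  set ψ : X → ℝ := fun x =>
    (FF m hT hf (q + b) : X → ℝ) x - (KK m hTm (FF m hT hf q) : X → ℝ) x with hψ
  have hψint : Integrable ψ m := (Lp2_integrable m _).sub (Lp2_integrable m _)
  have hfb : MeasurableSet {x | f x < b} := measurableSet_lt hf measurable_const
  have h : 0 ≤ᵐ[m] ({x | f x < b}.indicator ψ) := by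
    refine ae_nonneg_of_forall_setIntegral_nonneg (hψint.indicator hfb) fun s hs _ => ?_
    rw [setIntegral_indicator hfb]
    have hsub : ∀ x ∈ s ∩ {x | f x < b}, f x < b := fun x hx => hx.2
    have h2 := FF_setIntegral_sandwich_upper m hT hf hTm q b (hs.inter hfb) hsub
    rw [hψ, integral_sub (Lp2_integrable m _).integrableOn (Lp2_integrable m _).integrableOn]
    linarith
  have hK := coeFn_KK m hTm (FF m hT hf q)
  filter_upwards [h, hK] with x hx hKx hbx
  have h1 : 0 ≤ ψ x := by
    have hmem : x ∈ {y | f y < b} := hbx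
    simpa [Set.indicator_of_mem hmem] using hx
  have h2 : (KK m hTm (FF m hT hf q) : X → ℝ) x = (FF m hT hf q : X → ℝ) (T x) := hKx
  rw [hψ] at h1
  simp only at h1
  linarith [h1]

lemma ind01_birk_measurable (n : ℕ) (q : ℝ) :
    Measurable (fun x => ind01 (birk T f n x ≤ q)) := by
  have hs : MeasurableSet {x | birk T f n x ≤ q} :=
    measurableSet_le (birk_measurable hT hf n) measurable_const
  have h2 : (fun x => ind01 (birk T f n x ≤ q))
      = Set.indicator {x | birk T f n x ≤ q} (fun _ => (1:ℝ)) := by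
    ext x; by_cases h : birk T f n x ≤ q <;> simp [ind01, h]
  rw [h2]
  exact measurable_const.indicator hs

lemma integral_AA_eq (N : ℕ) (q : ℝ) :
    ∫ x, AA T f N q x ∂m
      = (N:ℝ)⁻¹ * ∑ n ∈ range N, (m {x | birk T f n x ≤ q}).toReal := by
  unfold AA
  rw [MeasureTheory.integral_const_mul]
  congr 1
  rw [integral_finset_sum _ (fun n _ => integrable_of_bnd m (ind01_birk_measurable hT hf n q)
    1 (fun x => abs_ind01_le _))]
  refine Finset.sum_congr rfl fun n _ => ?_
  have hs : MeasurableSet {x | birk T f n x ≤ q} :=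
    measurableSet_le (birk_measurable hT hf n) measurable_const
  have h2 : (fun x => ind01 (birk T f n x ≤ q))
      = Set.indicator {x | birk T f n x ≤ q} (fun _ => (1:ℝ)) := by
    ext x; by_cases h : birk T f n x ≤ q <;> simp [ind01, h]
  rw [h2, integral_indicator_const (1:ℝ) hs, smul_eq_mul, mul_one]
  rfl

lemma tendsto_integral_AA (q : ℝ) :
    Tendsto (fun N => ∫ x, AA T f N q x ∂m) (UF : Filter ℕ)
      (𝓝 (∫ x, (FF m hT hf q : X → ℝ) x ∂m)) := by
  simpa [Measure.restrict_univ] using tendsto_setIntegral_AA m hT hf q MeasurableSet.univ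

lemma integral_FF_le (C ε q : ℝ) (hC : 0 < C) (hq : q ≤ -C) (hε : 0 ≤ ε)
    (ht : ∀ n : ℕ, 1 ≤ n → m {x | C ≤ |birk T f n x|} ≤ ENNReal.ofReal ε) :
    ∫ x, (FF m hT hf q : X → ℝ) x ∂m ≤ ε := by
  refine le_of_tendsto (tendsto_integral_AA m hT hf q)
    (Filter.Eventually.of_forall fun N => ?_)
  rw [integral_AA_eq m hT hf N q]
  rcases Nat.eq_zero_or_pos N with hN | hN
  · simp [hN, hε]
  · have hNR : (0:ℝ) < N := by exact_mod_cast hN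
    have hterm : ∀ n ∈ range N, (m {x | birk T f n x ≤ q}).toReal ≤ ε := by
      intro n _
      rcases Nat.eq_zero_or_pos n with hn | hn
      · subst hn
        have hempty : {x | birk T f 0 x ≤ q} = (∅ : Set X) := by
          ext x
          simp only [birk, Finset.range_zero, Finset.sum_empty, Set.mem_setOf_eq,
            Set.mem_empty_iff_false, iff_false, not_le]
          linarith
        simp [hempty, hε]
      · have hsub : {x | birk T f n x ≤ q} ⊆ {x | C ≤ |birk T f n x|} := by
          intro x hx
          simp only [Set.mem_setOf_eq] at *
          have h5 : C ≤ -(birk T f n x) := by linarith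
          exact h5.trans (neg_le_abs _)
        exact ENNReal.toReal_le_of_le_ofReal hε ((measure_mono hsub).trans (ht n hn))
    calc (N:ℝ)⁻¹ * ∑ n ∈ range N, (m {x | birk T f n x ≤ q}).toReal
        ≤ (N:ℝ)⁻¹ * ((N:ℝ) * ε) := by
          refine mul_le_mul_of_nonneg_left ?_ (by positivity)
          calc ∑ n ∈ range N, (m {x | birk T f n x ≤ q}).toReal
              ≤ ∑ _n ∈ range N, ε := Finset.sum_le_sum hterm
            _ = (N:ℝ) * ε := by simp [mul_comm]
      _ = ε := by field_simp

lemma integral_FF_ge (C ε q : ℝ) (hC : 0 < C) (hq : C ≤ q) (hε : 0 ≤ ε)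
    (ht : ∀ n : ℕ, 1 ≤ n → m {x | C ≤ |birk T f n x|} ≤ ENNReal.ofReal ε) :
    1 - ε ≤ ∫ x, (FF m hT hf q : X → ℝ) x ∂m := by
  refine ge_of_tendsto (tendsto_integral_AA m hT hf q)
    (((eventually_ge_atTop 1).filter_mono UF_le_atTop).mono fun N hN => ?_)
  rw [integral_AA_eq m hT hf N q]
  have hNR : (0:ℝ) < N := by exact_mod_cast hN
  have hterm : ∀ n ∈ range N, 1 - ε ≤ (m {x | birk T f n x ≤ q}).toReal := by
    intro n _
    rcases Nat.eq_zero_or_pos n with hn | hn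
    · subst hn
      have huniv : {x | birk T f 0 x ≤ q} = (Set.univ : Set X) := by
        ext x
        simp only [birk, Finset.range_zero, Finset.sum_empty, Set.mem_setOf_eq,
          Set.mem_univ, iff_true]
        linarith
      simp [huniv]
      linarith
    · set S := {x | birk T f n x ≤ q} with hS
      have hSm : MeasurableSet S := measurableSet_le (birk_measurable hT hf n) measurable_const
      have hsub : Sᶜ ⊆ {x | C ≤ |birk T f n x|} := by
        intro x hx
        simp only [hS, Set.mem_compl_iff, Set.mem_setOf_eq, not_le] at hx
        have h5 : C ≤ birk T f n x := by linarith
        exact h5.trans (le_abs_self _)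
      have h1 : (m Sᶜ).toReal ≤ ε :=
        ENNReal.toReal_le_of_le_ofReal hε ((measure_mono hsub).trans (ht n hn))
      have h2 : (m Sᶜ).toReal = 1 - (m S).toReal := by
        rw [prob_compl_eq_one_sub hSm, ENNReal.toReal_sub_of_le prob_le_one ENNReal.one_ne_top]
        simp
      linarith
  calc (1:ℝ) - ε = (N:ℝ)⁻¹ * ((N:ℝ) * (1 - ε)) := by field_simp
    _ ≤ (N:ℝ)⁻¹ * ∑ n ∈ range N, (m {x | birk T f n x ≤ q}).toReal := by
        refine mul_le_mul_of_nonneg_left ?_ (by positivity)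
        calc (N:ℝ) * (1 - ε) = ∑ _n ∈ range N, (1 - ε) := by simp [mul_comm]; ring
          _ ≤ ∑ n ∈ range N, (m {x | birk T f n x ≤ q}).toReal := Finset.sum_le_sum hterm

lemma meas_FF_ge_half (ε q : ℝ) (hε : 0 ≤ ε)
    (hint : ∫ x, (FF m hT hf q : X → ℝ) x ∂m ≤ ε) :
    (m {x | 1/2 ≤ (FF m hT hf q : X → ℝ) x}).toReal ≤ 2 * ε := by
  have h := mul_meas_ge_le_integral_of_nonneg (FF_ae_nonneg m hT hf q)
    (Lp2_integrable m _) (1/2)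
  have h2 : (0:ℝ) ≤ (m {x | 1/2 ≤ (FF m hT hf q : X → ℝ) x}).toReal := ENNReal.toReal_nonneg
  rw [measureReal_def] at h
  nlinarith

lemma meas_FF_lt_half (ε q : ℝ) (hε : 0 ≤ ε)
    (hint : 1 - ε ≤ ∫ x, (FF m hT hf q : X → ℝ) x ∂m) :
    (m {x | (FF m hT hf q : X → ℝ) x < 1/2}).toReal ≤ 2 * ε := by
  set g1 : X → ℝ := fun x => 1 - (FF m hT hf q : X → ℝ) x with hg1
  have hnn : 0 ≤ᵐ[m] g1 := by
    filter_upwards [FF_ae_le_one m hT hf q] with x hx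
    simp only [hg1, Pi.zero_apply]
    linarith
  have hgint : Integrable g1 m := (integrable_const 1).sub (Lp2_integrable m _)
  have hI : ∫ x, g1 x ∂m ≤ ε := by
    have : ∫ x, g1 x ∂m = 1 - ∫ x, (FF m hT hf q : X → ℝ) x ∂m := by
      rw [hg1]
      rw [integral_sub (integrable_const 1) (Lp2_integrable m _)]
      simp
    linarith
  have h := mul_meas_ge_le_integral_of_nonneg hnn hgint (1/2)
  have hsub : {x | (FF m hT hf q : X → ℝ) x < 1/2} ⊆ {x | 1/2 ≤ g1 x} := by
    intro x hx
    simp only [Set.mem_setOf_eq, hg1] at *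
    linarith
  have hmono : (m {x | (FF m hT hf q : X → ℝ) x < 1/2}).toReal
      ≤ (m {x | 1/2 ≤ g1 x}).toReal :=
    ENNReal.toReal_mono (measure_ne_top m _) (measure_mono hsub)
  have h2 : (0:ℝ) ≤ (m {x | 1/2 ≤ g1 x}).toReal := ENNReal.toReal_nonneg
  rw [measureReal_def] at h
  nlinarith

end L2M

section Backward

variable {X : Type*} [MeasurableSpace X]

lemma schmidt_backward (m : Measure X) [IsProbabilityMeasure m] (T : X → X) (f : X → ℝ)
    (hTm : MeasurePreserving T m m) (hT : Measurable T) (hf : Measurable f)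
    (tight : ∀ ε > 0, ∃ C > 0, ∀ n : ℕ, 1 ≤ n →
      m {x | C ≤ |birk T f n x|} ≤ ENNReal.ofReal ε) :
    ∃ g : X → ℝ, Measurable g ∧ f =ᵐ[m] fun x => g x - g (T x) := by
  classical
  set Fq : ℚ → X → ℝ := fun q x => (FF m hT hf (q:ℝ) : X → ℝ) x with hFq
  have hFqMeas : ∀ q : ℚ, Measurable (Fq q) := fun q =>
    (Lp.stronglyMeasurable (FF m hT hf (q:ℝ))).measurable
  -- the two bad sets are null
  have hB0 : m {x | ∀ q : ℚ, Fq q x < 1/2} = 0 := by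
    have hB : ∀ k : ℕ, m {x | ∀ q : ℚ, Fq q x < 1/2} ≤ ENNReal.ofReal (4 * (1/2)^k) := by
      intro k
      have hε : (0:ℝ) < (1/2)^k := by positivity
      obtain ⟨C, hC, ht⟩ := tight ((1/2)^k) hε
      obtain ⟨qk, hqk⟩ := exists_rat_gt C
      have hint := integral_FF_ge m hT hf C ((1/2)^k) (qk:ℝ) hC hqk.le hε.le ht
      have hm := meas_FF_lt_half m hT hf ((1/2)^k) (qk:ℝ) hε.le hint
      have hsub : {x | ∀ q : ℚ, Fq q x < 1/2}
          ⊆ {x | (FF m hT hf (qk:ℝ) : X → ℝ) x < 1/2} := fun x hx => hx qk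
      refine le_trans (measure_mono hsub) ?_
      rw [ENNReal.le_ofReal_iff_toReal_le (measure_ne_top m _) (by positivity)]
      nlinarith
    have htd : Tendsto (fun k : ℕ => ENNReal.ofReal (4 * (1/2)^k)) atTop (𝓝 0) := by
      rw [show (0:ℝ≥0∞) = ENNReal.ofReal 0 by simp]
      apply ENNReal.tendsto_ofReal
      have h2 := tendsto_pow_atTop_nhds_zero_of_lt_one
        (by norm_num : (0:ℝ) ≤ 1/2) (by norm_num : (1/2:ℝ) < 1)
      simpa using h2.const_mul 4
    exact le_antisymm (ge_of_tendsto htd (Filter.Eventually.of_forall hB)) zero_le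
  have hB1 : m {x | ∀ q : ℚ, 1/2 ≤ Fq q x} = 0 := by
    have hB : ∀ k : ℕ, m {x | ∀ q : ℚ, 1/2 ≤ Fq q x} ≤ ENNReal.ofReal (4 * (1/2)^k) := by
      intro k
      have hε : (0:ℝ) < (1/2)^k := by positivity
      obtain ⟨C, hC, ht⟩ := tight ((1/2)^k) hε
      obtain ⟨qk, hqk⟩ := exists_rat_lt (-C)
      have hint := integral_FF_le m hT hf C ((1/2)^k) (qk:ℝ) hC hqk.le hε.le ht
      have hm := meas_FF_ge_half m hT hf ((1/2)^k) (qk:ℝ) hε.le hint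
      have hsub : {x | ∀ q : ℚ, 1/2 ≤ Fq q x}
          ⊆ {x | 1/2 ≤ (FF m hT hf (qk:ℝ) : X → ℝ) x} := fun x hx => hx qk
      refine le_trans (measure_mono hsub) ?_
      rw [ENNReal.le_ofReal_iff_toReal_le (measure_ne_top m _) (by positivity)]
      nlinarith
    have htd : Tendsto (fun k : ℕ => ENNReal.ofReal (4 * (1/2)^k)) atTop (𝓝 0) := by
      rw [show (0:ℝ≥0∞) = ENNReal.ofReal 0 by simp]
      apply ENNReal.tendsto_ofReal
      have h2 := tendsto_pow_atTop_nhds_zero_of_lt_one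
        (by norm_num : (0:ℝ) ≤ 1/2) (by norm_num : (1/2:ℝ) < 1)
      simpa using h2.const_mul 4
    exact le_antisymm (ge_of_tendsto htd (Filter.Eventually.of_forall hB)) zero_le
  have hne : ∀ᵐ x ∂m, ∃ q : ℚ, 1/2 ≤ Fq q x := by
    have heq : {x | ¬ ∃ q : ℚ, 1/2 ≤ Fq q x} = {x | ∀ q : ℚ, Fq q x < 1/2} := by
      ext x; simp [not_exists, not_le]
    rw [ae_iff, heq]; exact hB0
  have hbd : ∀ᵐ x ∂m, ∃ q : ℚ, Fq q x < 1/2 := by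
    have heq : {x | ¬ ∃ q : ℚ, Fq q x < 1/2} = {x | ∀ q : ℚ, 1/2 ≤ Fq q x} := by
      ext x; simp [not_exists, not_lt]
    rw [ae_iff, heq]; exact hB1
  have hmono : ∀ᵐ x ∂m, ∀ q q' : ℚ, q ≤ q' → Fq q x ≤ Fq q' x := by
    rw [ae_all_iff]
    intro q
    rw [ae_all_iff]
    intro q'
    by_cases h : q ≤ q'
    · filter_upwards [FF_ae_mono m hT hf (show (q:ℝ) ≤ (q':ℝ) by exact_mod_cast h)]
        with x hx _
      exact hx
    · exact Filter.Eventually.of_forall fun x hq => absurd hq h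
  -- the good set
  set Ω : Set X := {x | (∀ q q' : ℚ, q ≤ q' → Fq q x ≤ Fq q' x) ∧
      (∃ q : ℚ, 1/2 ≤ Fq q x) ∧ (∃ q : ℚ, Fq q x < 1/2)} with hΩ
  have hΩmeas : MeasurableSet Ω := by
    have h1 : MeasurableSet {x | ∀ q q' : ℚ, q ≤ q' → Fq q x ≤ Fq q' x} := by
      rw [Set.setOf_forall]
      refine MeasurableSet.iInter fun q => ?_
      rw [Set.setOf_forall]
      refine MeasurableSet.iInter fun q' => ?_
      by_cases h : q ≤ q'
      · have heq : {x | q ≤ q' → Fq q x ≤ Fq q' x} = {x | Fq q x ≤ Fq q' x} := by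
          ext x; simp [h]
        rw [heq]
        exact measurableSet_le (hFqMeas q) (hFqMeas q')
      · have heq : {x | q ≤ q' → Fq q x ≤ Fq q' x} = Set.univ := by
          ext x; simp [h]
        rw [heq]; exact MeasurableSet.univ
    have h2 : MeasurableSet {x | ∃ q : ℚ, 1/2 ≤ Fq q x} := by
      rw [Set.setOf_exists]
      exact MeasurableSet.iUnion fun q => measurableSet_le measurable_const (hFqMeas q)
    have h3 : MeasurableSet {x | ∃ q : ℚ, Fq q x < 1/2} := by
      rw [Set.setOf_exists]
      exact MeasurableSet.iUnion fun q => measurableSet_lt (hFqMeas q) measurable_const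
    exact (h1.inter (h2.inter h3))
  have hΩae : ∀ᵐ x ∂m, x ∈ Ω := by
    filter_upwards [hmono, hne, hbd] with x h1 h2 h3
    exact ⟨h1, h2, h3⟩
  -- modified distribution functions, globally well-behaved
  set FQ : ℚ → X → ℝ := fun q x => if x ∈ Ω then Fq q x else (if (0:ℚ) ≤ q then 1 else 0)
    with hFQ
  have hFQmeas : ∀ q : ℚ, Measurable (FQ q) := fun q =>
    Measurable.ite hΩmeas (hFqMeas q) measurable_const
  have hFQmono : ∀ x : X, ∀ q q' : ℚ, q ≤ q' → FQ q x ≤ FQ q' x := by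
    intro x q q' hqq'
    by_cases hx : x ∈ Ω
    · simp only [hFQ, hx, if_true]
      exact hx.1 q q' hqq'
    · simp only [hFQ, hx, if_false]
      split_ifs with h1 h2
      · norm_num
      · exact absurd (h1.trans hqq') h2
      · norm_num
      · norm_num
  have hFQne : ∀ x : X, ∃ q : ℚ, 1/2 ≤ FQ q x := by
    intro x
    by_cases hx : x ∈ Ω
    · obtain ⟨q, hq⟩ := hx.2.1
      exact ⟨q, by simp only [hFQ, hx, if_true]; exact hq⟩
    · exact ⟨0, by simp only [hFQ, hx, if_false]; norm_num⟩
  have hFQbd : ∀ x : X, ∃ q : ℚ, FQ q x < 1/2 := by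
    intro x
    by_cases hx : x ∈ Ω
    · obtain ⟨q, hq⟩ := hx.2.2
      exact ⟨q, by simp only [hFQ, hx, if_true]; exact hq⟩
    · exact ⟨-1, by simp only [hFQ, hx, if_false]; norm_num⟩
  -- the quantile function
  set SS : X → Set ℝ := fun x => {r : ℝ | ∃ q : ℚ, (q:ℝ) = r ∧ 1/2 ≤ FQ q x} with hSS
  have hSSne : ∀ x, (SS x).Nonempty := by
    intro x
    obtain ⟨q, hq⟩ := hFQne x
    exact ⟨(q:ℝ), q, rfl, hq⟩
  have hSSbdd : ∀ x, BddBelow (SS x) := by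
    intro x
    obtain ⟨q0, hq0⟩ := hFQbd x
    refine ⟨(q0:ℝ), ?_⟩
    rintro r ⟨q, rfl, hq⟩
    have hle : q0 ≤ q := by
      by_contra hcon
      push_neg at hcon
      exact absurd (le_trans hq (hFQmono x q q0 hcon.le)) (not_le.2 hq0)
    exact_mod_cast hle
  set G : X → ℝ := fun x => sInf (SS x) with hG
  have hG2 : ∀ (x : X) (q : ℚ), 1/2 ≤ FQ q x → G x ≤ (q:ℝ) := fun x q h =>
    csInf_le (hSSbdd x) ⟨q, rfl, h⟩
  have hG1 : ∀ (x : X) (q : ℚ), G x < (q:ℝ) → 1/2 ≤ FQ q x := by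
    intro x q h
    obtain ⟨r, ⟨q', rfl, hq'⟩, hlt⟩ := (csInf_lt_iff (hSSbdd x) (hSSne x)).1 h
    have hle : q' ≤ q := by exact_mod_cast hlt.le
    exact le_trans hq' (hFQmono x q' q hle)
  have hGmeas : Measurable G := by
    apply measurable_of_Iio
    intro c
    have heq : G ⁻¹' Set.Iio c = ⋃ q : ℚ, {x | (q:ℝ) < c ∧ 1/2 ≤ FQ q x} := by
      ext x
      simp only [Set.mem_preimage, Set.mem_Iio, Set.mem_iUnion, Set.mem_setOf_eq]
      constructor
      · intro hx
        obtain ⟨r, ⟨q, rfl, hq⟩, hlt⟩ := (csInf_lt_iff (hSSbdd x) (hSSne x)).1 hx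
        exact ⟨q, hlt, hq⟩
      · rintro ⟨q, hq1, hq2⟩
        exact lt_of_le_of_lt (hG2 x q hq2) hq1
    rw [heq]
    refine MeasurableSet.iUnion fun q => ?_
    by_cases hqc : (q:ℝ) < c
    · have heq2 : {x | (q:ℝ) < c ∧ 1/2 ≤ FQ q x} = {x | 1/2 ≤ FQ q x} := by
        ext x; simp [hqc]
      rw [heq2]
      exact measurableSet_le measurable_const (hFQmeas q)
    · have heq2 : {x | (q:ℝ) < c ∧ 1/2 ≤ FQ q x} = ∅ := by
        ext x; simp [hqc]
      rw [heq2]; exact MeasurableSet.empty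
  -- a.e. sandwich at rational levels
  have hsl : ∀ᵐ x ∂m, ∀ q a : ℚ, (a:ℝ) ≤ f x → Fq (q+a) x ≤ Fq q (T x) := by
    rw [ae_all_iff]
    intro q
    rw [ae_all_iff]
    intro a
    filter_upwards [FF_ae_sandwich_lower m hT hf hTm (q:ℝ) (a:ℝ)] with x hx hax
    have hc : ((q + a : ℚ) : ℝ) = (q:ℝ) + (a:ℝ) := by push_cast; ring
    simp only [hFq, hc]
    exact hx hax
  have hsu : ∀ᵐ x ∂m, ∀ q b : ℚ, f x < (b:ℝ) → Fq q (T x) ≤ Fq (q+b) x := by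
    rw [ae_all_iff]
    intro q
    rw [ae_all_iff]
    intro b
    filter_upwards [FF_ae_sandwich_upper m hT hf hTm (q:ℝ) (b:ℝ)] with x hx hbx
    have hc : ((q + b : ℚ) : ℝ) = (q:ℝ) + (b:ℝ) := by push_cast; ring
    simp only [hFq, hc]
    exact hx hbx
  have hTΩ : ∀ᵐ x ∂m, T x ∈ Ω := by
    have h0 : m Ωᶜ = 0 := by
      have := hΩae
      rwa [ae_iff] at this
    have h1 := hTm.quasiMeasurePreserving.preimage_null h0
    rw [ae_iff]
    have heq : {x | ¬ T x ∈ Ω} = T ⁻¹' Ωᶜ := rfl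
    rw [heq]
    exact h1
  -- conclusion
  refine ⟨G, hGmeas, ?_⟩
  filter_upwards [hΩae, hTΩ, hsl, hsu] with x hxΩ hTxΩ hxl hxu
  have key1 : G (T x) ≤ G x - f x := by
    have hstep : ∀ q : ℚ, G x - f x < (q:ℝ) → G (T x) ≤ (q:ℝ) := by
      intro q hq
      obtain ⟨a, ha1, ha2⟩ := exists_rat_btwn (show G x - (q:ℝ) < f x by linarith)
      have h1 : G x < ((q + a : ℚ) : ℝ) := by push_cast; linarith
      have h2 : 1/2 ≤ FQ (q + a) x := hG1 x (q+a) h1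
      have h3 : FQ (q+a) x = Fq (q+a) x := by simp only [hFQ, hxΩ, if_true]
      have h4 : Fq (q+a) x ≤ Fq q (T x) := hxl q a ha2.le
      have h5 : 1/2 ≤ FQ q (T x) := by
        rw [show FQ q (T x) = Fq q (T x) by simp only [hFQ, hTxΩ, if_true]]
        exact le_trans (h3 ▸ h2) h4
      exact hG2 (T x) q h5
    by_contra hcon
    push_neg at hcon
    obtain ⟨q, hq1, hq2⟩ := exists_rat_btwn hcon
    exact absurd (hstep q hq1) (not_le.2 hq2)
  have key2 : G x - f x ≤ G (T x) := by
    refine le_csInf (hSSne (T x)) ?_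
    rintro r ⟨q, rfl, hq⟩
    by_contra hcon
    push_neg at hcon
    obtain ⟨b, hb1, hb2⟩ := exists_rat_btwn (show f x < G x - (q:ℝ) by linarith)
    have h2 : Fq q (T x) ≤ Fq (q + b) x := hxu q b hb1
    have h3 : 1/2 ≤ Fq q (T x) := by
      rw [show Fq q (T x) = FQ q (T x) by simp only [hFQ, hTxΩ, if_true]]
      exact hq
    have h4 : 1/2 ≤ FQ (q+b) x := by
      rw [show FQ (q+b) x = Fq (q+b) x by simp only [hFQ, hxΩ, if_true]]
      exact le_trans h3 h2
    have h5 := hG2 x (q+b) h4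
    push_cast at h5
    linarith
  show f x = G x - G (T x)
  linarith

end Backward


section Forward

variable {X : Type*} [MeasurableSpace X] (m : Measure X) [IsProbabilityMeasure m]
    (T : X → X) (f : X → ℝ)


lemma schmidt_forward (hTm : MeasurePreserving T m m) (hf : Measurable f)
    (g : X → ℝ) (hg : Measurable g) (hfg : f =ᵐ[m] fun x => g x - g (T x)) :
    ∀ ε > 0, ∃ C > 0, ∀ n : ℕ, 1 ≤ n →
      m {x | C ≤ |∑ k ∈ range n, f (T^[k] x)|} ≤ ENNReal.ofReal ε := by
  have hIter : ∀ k : ℕ, MeasurePreserving (T^[k]) m m := fun k => hTm.iterate k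
  have hae : ∀ᵐ x ∂m, ∀ n : ℕ, (∑ k ∈ range n, f (T^[k] x)) = g x - g (T^[n] x) := by
    have h1 : ∀ k : ℕ, ∀ᵐ x ∂m, f (T^[k] x) = g (T^[k] x) - g (T^[k+1] x) := by
      intro k
      have := hfg.comp_tendsto ((hIter k).quasiMeasurePreserving.tendsto_ae)
      filter_upwards [this] with x hx
      simpa [Function.comp, Function.iterate_succ_apply'] using hx
    filter_upwards [ae_all_iff.2 h1] with x hx n
    calc (∑ k ∈ range n, f (T^[k] x))
        = ∑ k ∈ range n, (g (T^[k] x) - g (T^[k+1] x)) := by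
          exact Finset.sum_congr rfl fun k _ => hx k
      _ = g (T^[0] x) - g (T^[n] x) := Finset.sum_range_sub' (fun k => g (T^[k] x)) n
      _ = g x - g (T^[n] x) := by simp
  intro ε hε
  -- choose M with m {M ≤ |g|} ≤ ε/2
  have htend : Tendsto (fun k : ℕ => m {x | (k : ℝ) ≤ |g x|}) atTop (𝓝 (m (⋂ k : ℕ, {x | (k : ℝ) ≤ |g x|}))) := by
    apply tendsto_measure_iInter_atTop (fun k => ((measurableSet_le measurable_const hg.abs)).nullMeasurableSet)
    · intro i j hij
      intro x hx
      exact le_trans (show (i:ℝ) ≤ (j:ℝ) by exact_mod_cast hij) hx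
    · exact ⟨0, measure_ne_top m _⟩
  have hempty : (⋂ k : ℕ, {x | (k : ℝ) ≤ |g x|}) = ∅ := by
    ext x
    simp only [Set.mem_iInter, Set.mem_setOf_eq, Set.mem_empty_iff_false, iff_false, not_forall, not_le]
    obtain ⟨k, hk⟩ := exists_nat_gt (|g x|)
    exact ⟨k, hk⟩
  rw [hempty, measure_empty] at htend
  have hhalf : (0:ℝ≥0∞) < ENNReal.ofReal (ε/2) := by
    simp [ENNReal.ofReal_pos]; linarith
  obtain ⟨M, hM⟩ : ∃ M : ℕ, m {x | (M:ℝ) ≤ |g x|} ≤ ENNReal.ofReal (ε/2) := by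
    have := htend.eventually_lt_const hhalf
    obtain ⟨M, hM⟩ := this.exists
    exact ⟨M, hM.le⟩
  refine ⟨2 * M + 1, by positivity, fun n hn => ?_⟩
  have hsub : {x | (2*(M:ℝ)+1) ≤ |∑ k ∈ range n, f (T^[k] x)|} ≤ᵐ[m]
      ({x | (M:ℝ) ≤ |g x|} ∪ T^[n] ⁻¹' {x | (M:ℝ) ≤ |g x|} : Set X) := by
    filter_upwards [hae] with x hx hmem
    show x ∈ ({x | (M:ℝ) ≤ |g x|} ∪ T^[n] ⁻¹' {x | (M:ℝ) ≤ |g x|} : Set X)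
    by_contra hcon
    simp only [Set.mem_union, Set.mem_preimage, Set.mem_setOf_eq, not_or, not_le] at hcon
    have : |∑ k ∈ range n, f (T^[k] x)| ≤ |g x| + |g (T^[n] x)| := by
      rw [hx n]; exact abs_sub _ _
    have hmem' : (2*(M:ℝ)+1) ≤ |∑ k ∈ range n, f (T^[k] x)| := hmem
    nlinarith [hcon.1, hcon.2]
  calc m {x | (2*(M:ℝ)+1) ≤ |∑ k ∈ range n, f (T^[k] x)|}
      ≤ m ({x | (M:ℝ) ≤ |g x|} ∪ T^[n] ⁻¹' {x | (M:ℝ) ≤ |g x|}) := measure_mono_ae hsub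
    _ ≤ m {x | (M:ℝ) ≤ |g x|} + m (T^[n] ⁻¹' {x | (M:ℝ) ≤ |g x|}) := measure_union_le _ _
    _ = m {x | (M:ℝ) ≤ |g x|} + m {x | (M:ℝ) ≤ |g x|} := by
        rw [(hIter n).measure_preimage ((measurableSet_le measurable_const hg.abs)).nullMeasurableSet]
    _ ≤ ENNReal.ofReal (ε/2) + ENNReal.ofReal (ε/2) := add_le_add hM hM
    _ = ENNReal.ofReal ε := by
        rw [← ENNReal.ofReal_add (by linarith) (by linarith)]; ring_nf

end Forward

end

open MeasureTheory Finset

/-- Schmidt's coboundary criterion: `f` is a measurable coboundary iff the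
distributions of its Birkhoff sums are tight. -/
theorem stmt_8 {X : Type*} [MeasurableSpace X] (m : Measure X) [IsProbabilityMeasure m]
    (T : X → X) (hT : Ergodic T m) (f : X → ℝ) (hf : Measurable f) :
    (∃ g : X → ℝ, Measurable g ∧ f =ᵐ[m] fun x => g x - g (T x)) ↔
    (∀ ε > 0, ∃ C > 0, ∀ n : ℕ, 1 ≤ n →
      m {x | C ≤ |∑ k ∈ range n, f (T^[k] x)|} ≤ ENNReal.ofReal ε) := by
  constructor
  · rintro ⟨g, hg, hfg⟩
    exact schmidt_forward m T f hT.toMeasurePreserving hf g hg hfg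
  · intro tight
    exact schmidt_backward m T f hT.toMeasurePreserving hT.toMeasurePreserving.measurable hf tight
end
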